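/- arXiv:2211.10704 — 10 statements merged into one kernel-verified Lean document; each statement's English description precedes it below -/
import Mathlib

section
/- Fix k ∈ ℂ with P_n(k) ≠ 0 for all n, fix b ∈ ℂ, and define the monic quasi-type kernel polynomials of order one Q*_m(k;x) := P*_m(k;x) + b P*_{m−1}(k;x) for m ≥ 1. Set D_m(x) := x − c*_{m+1} + b and J_{m+1}(x) := b D_m(x) + λ*_{m+1}. Then for every n ≥ 1 the polynomial identity J_{n+1}(x) Q*_{n+2}(k;x) = [D_{n+1}(x) J_{n+1}(x) − b J_{n+2}(x)] Q*_{n+1}(k;x) − λ*_{n+1} J_{n+2}(x) Q*_n(k;x) holds. -/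
open Polynomial

/-- Complexification of a real polynomial. -/
noncomputable def cpx (p : Polynomial ℝ) : Polynomial ℂ :=
  p.map (algebraMap ℝ ℂ)

/-- `D_m(x) := x − c*_{m+1} + b`. -/
noncomputable def Dpoly (cstar : ℕ → ℂ) (b : ℂ) (m : ℕ) : Polynomial ℂ :=
  X - Polynomial.C (cstar (m + 1)) + Polynomial.C b

/-- `J_{m+1}(x) := b D_m(x) + λ*_{m+1}`, i.e. `J_m = b D_{m-1} + λ*_m`. -/
noncomputable def Jpoly (cstar lamstar : ℕ → ℂ) (b : ℂ) (m : ℕ) : Polynomial ℂ :=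
  Polynomial.C b * Dpoly cstar b (m - 1) + Polynomial.C (lamstar m)

/-!
Writing the recurrence as `P*_{m+1} = (x - c*_{m+1}) P*_m - λ*_{m+1} P*_{m-1}`, the pair
`(Q*_{m+1}, Q*_m)` is the image of `(P*_m, P*_{m-1})` under the matrix `[[D_m, -λ*_{m+1}], [1, b]]`,
whose determinant is `J_{m+1}`. Inverting it gives `J_{m+1} P*_m = b Q*_{m+1} + λ*_{m+1} Q*_m`;
substituting this and `P*_{n+1} = Q*_{n+1} - b P*_n` into `Q*_{n+2} = D_{n+1} P*_{n+1} - λ*_{n+2} P*_n`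
yields the identity, because `b D_{n+1} + λ*_{n+2} = J_{n+2}`.
-/

section QuasiKernel

variable {cstar lamstar : ℕ → ℂ} {b : ℂ} {p : ℕ → ℂ[X]} {m : ℕ}

theorem Jpoly_add_one (cstar lamstar : ℕ → ℂ) (b : ℂ) (m : ℕ) :
    Jpoly cstar lamstar b (m + 1) = C b * Dpoly cstar b m + C (lamstar (m + 1)) :=
  rfl

theorem add_C_mul_eq_Dpoly_mul_sub
    (hrec : X * p m = p (m + 1) + C (cstar (m + 1)) * p m + C (lamstar (m + 1)) * p (m - 1)) :
    p (m + 1) + C b * p m = Dpoly cstar b m * p m - C (lamstar (m + 1)) * p (m - 1) := by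
  rw [Dpoly]
  linear_combination -hrec

theorem Jpoly_mul_eq_add
    (hrec : X * p m = p (m + 1) + C (cstar (m + 1)) * p m + C (lamstar (m + 1)) * p (m - 1)) :
    Jpoly cstar lamstar b (m + 1) * p m =
      C b * (p (m + 1) + C b * p m) + C (lamstar (m + 1)) * (p m + C b * p (m - 1)) := by
  rw [Jpoly_add_one, add_C_mul_eq_Dpoly_mul_sub (b := b) hrec]
  ring

end QuasiKernel

theorem stmt_3_general
    (Pstar : ℕ → Polynomial ℂ)
    (cstar lamstar : ℕ → ℂ)
    (hstarrec : ∀ n, 1 ≤ n → X * Pstar n =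
      Pstar (n + 1) + Polynomial.C (cstar (n + 1)) * Pstar n +
        Polynomial.C (lamstar (n + 1)) * Pstar (n - 1))
    (b : ℂ)
    (Qstar : ℕ → Polynomial ℂ)
    (hQstar : ∀ m, 1 ≤ m → Qstar m = Pstar m + Polynomial.C b * Pstar (m - 1)) :
    ∀ n, 1 ≤ n →
      Jpoly cstar lamstar b (n + 1) * Qstar (n + 2) =
        (Dpoly cstar b (n + 1) * Jpoly cstar lamstar b (n + 1) -
            Polynomial.C b * Jpoly cstar lamstar b (n + 2)) * Qstar (n + 1) -
          Polynomial.C (lamstar (n + 1)) * Jpoly cstar lamstar b (n + 2) * Qstar n := by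
  intro n hn
  have hQ₁ : Qstar (n + 1) = Pstar (n + 1) + C b * Pstar n := hQstar (n + 1) (by omega)
  have hQ₂ : Qstar (n + 2) =
      Dpoly cstar b (n + 1) * Pstar (n + 1) - C (lamstar (n + 2)) * Pstar n :=
    (hQstar (n + 2) (by omega)).trans (add_C_mul_eq_Dpoly_mul_sub (hstarrec (n + 1) (by omega)))
  have hJP : Jpoly cstar lamstar b (n + 1) * Pstar n =
      C b * Qstar (n + 1) + C (lamstar (n + 1)) * Qstar n := by
    rw [hQ₁, hQstar n hn]
    exact Jpoly_mul_eq_add (hstarrec n hn)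
  calc Jpoly cstar lamstar b (n + 1) * Qstar (n + 2)
      = Dpoly cstar b (n + 1) * Jpoly cstar lamstar b (n + 1) * Qstar (n + 1) -
          Jpoly cstar lamstar b (n + 2) * (Jpoly cstar lamstar b (n + 1) * Pstar n) := by
        rw [hQ₂, hQ₁, Jpoly_add_one _ _ _ (n + 1)]
        ring
    _ = _ := by
        rw [hJP]
        ring

/-- With `P` the monic OPS of a positive definite moment functional,
`Pstar` the monic kernel polynomials at `k` satisfying the three-term recurrence with
coefficients `c*`, `λ* ≠ 0`, and `Q*_m := P*_m + b P*_{m−1}` the monic quasi-type kernel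
polynomials of order one: for every `n ≥ 1`,
`J_{n+1} Q*_{n+2} = [D_{n+1} J_{n+1} − b J_{n+2}] Q*_{n+1} − λ*_{n+1} J_{n+2} Q*_n`. -/
theorem stmt_3
    (L : Polynomial ℝ →ₗ[ℝ] ℝ)
    (hposdef : ∀ p : Polynomial ℝ, p ≠ 0 → 0 < L (p ^ 2))
    (P : ℕ → Polynomial ℝ)
    (hmonic : ∀ n, (P n).Monic)
    (hdeg : ∀ n, (P n).natDegree = n)
    (horth : ∀ m n, m ≠ n → L (P m * P n) = 0)
    (c lam : ℕ → ℝ)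
    (hP0 : P 0 = 1)
    (hP1 : P 1 = X - Polynomial.C (c 1))
    (hrec : ∀ n, 1 ≤ n → X * P n =
      P (n + 1) + Polynomial.C (c (n + 1)) * P n + Polynomial.C (lam (n + 1)) * P (n - 1))
    (hlampos : ∀ n, 1 ≤ n → 0 < lam (n + 1))
    (k : ℂ)
    (hk : ∀ n, (cpx (P n)).eval k ≠ 0)
    (Pstar : ℕ → Polynomial ℂ)
    (hPstar : ∀ n, (X - Polynomial.C k) * Pstar n =
      cpx (P (n + 1)) -
        Polynomial.C ((cpx (P (n + 1))).eval k / (cpx (P n)).eval k) * cpx (P n))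
    (cstar lamstar : ℕ → ℂ)
    (hstarrec : ∀ n, 1 ≤ n → X * Pstar n =
      Pstar (n + 1) + Polynomial.C (cstar (n + 1)) * Pstar n +
        Polynomial.C (lamstar (n + 1)) * Pstar (n - 1))
    (hlamstar : ∀ n, 1 ≤ n → lamstar (n + 1) ≠ 0)
    (b : ℂ)
    (Qstar : ℕ → Polynomial ℂ)
    (hQstar : ∀ m, 1 ≤ m → Qstar m = Pstar m + Polynomial.C b * Pstar (m - 1)) :
    ∀ n, 1 ≤ n →
      Jpoly cstar lamstar b (n + 1) * Qstar (n + 2) =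
        (Dpoly cstar b (n + 1) * Jpoly cstar lamstar b (n + 1) -
            Polynomial.C b * Jpoly cstar lamstar b (n + 2)) * Qstar (n + 1) -
          Polynomial.C (lamstar (n + 1)) * Jpoly cstar lamstar b (n + 2) * Qstar n :=
  stmt_3_general Pstar cstar lamstar hstarrec b Qstar hQstar
end

section
/- Fix k₁, k₂ ∈ ℂ with P_n(k₁) ≠ 0 and P_n(k₂) ≠ 0 for all n, fix B_{n+1} ∈ ℂ, and let T*_{n+1}(k₁;x) := P*_{n+1}(k₁;x) + B_{n+1} P*_n(k₁;x) be a monic quasi-type kernel polynomial of order one. Define η_n := −(λ_{n+2} + B_{n+1} P_{n+1}(k₁)/P_n(k₁)) · P_n(k₂)/P_{n+1}(k₂) and γ_n := c_{n+2} + P_{n+2}(k₁)/P_{n+1}(k₁) − B_{n+1} − η_n. Then for every n ≥ 0 the polynomial identity (x − k₁) T*_{n+1}(k₁;x) + η_n (x − k₂) P*_n(k₂;x) = (x − γ_n) P_{n+1}(x) holds; moreover (γ_n, η_n) is the unique pair of constants in ℂ² with this property. -/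
/-!
Substituting the defining relations of the kernel polynomials, the left-hand side becomes a
combination of `x P_{n+1}`, `P_{n+2}`, `P_{n+1}` and `P_n`; the three-term recurrence removes
`x P_{n+1}`, and the choice of `η_n` is exactly what cancels the `P_n` term, which leaves
`(x − γ_n) P_{n+1}`. For uniqueness, two such pairs differ by a relation
`α P_{n+1} = β P_n`, which forces `α = β = 0` by degree, and `β` is a nonzero multiple of the
difference of the `η`'s because `P_{n+1}(k₂) ≠ 0`.
-/

open Polynomial

section CommRing

variable {R : Type*} [CommRing R]

lemma eq_zero_of_C_mul_eq_C_mul [IsDomain R] {p q : R[X]} (hq : q.Monic) (hp : p ≠ 0)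
    (hpq : p.natDegree < q.natDegree) {α β : R} (h : C α * q = C β * p) : α = 0 ∧ β = 0 := by
  have hα : α = 0 := by
    simpa [coeff_C_mul, hq.coeff_natDegree, coeff_eq_zero_of_natDegree_lt hpq] using
      congrArg (coeff · q.natDegree) h
  refine ⟨hα, ?_⟩
  rw [hα, C_0, zero_mul, eq_comm, mul_eq_zero, C_eq_zero] at h
  exact h.resolve_right hp

lemma X_sub_C_mul_add_C_mul_kernel_eq {p₀ p₁ p₂ S₁ S₁' S₂ : R[X]} {c l k₁ k₂ a₀ a₁ b B η γ : R}
    (hrec : X * p₁ = p₂ + C c * p₁ + C l * p₀)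
    (hS₁ : (X - C k₁) * S₁ = p₁ - C a₀ * p₀)
    (hS₁' : (X - C k₁) * S₁' = p₂ - C a₁ * p₁)
    (hS₂ : (X - C k₂) * S₂ = p₁ - C b * p₀)
    (hη : η * b = -(l + B * a₀)) (hγ : γ = c + a₁ - B - η) :
    (X - C k₁) * (S₁' + C B * S₁) + C η * ((X - C k₂) * S₂) = (X - C γ) * p₁ := by
  have hηC : C η * C b = -(C l + C B * C a₀) := by
    simpa only [C_mul, C_add, C_neg] using congrArg C hη
  rw [hγ]
  simp only [C_add, C_sub]
  linear_combination hS₁' + C B * hS₁ + C η * hS₂ - hrec - p₀ * hηC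

lemma eq_of_add_C_mul_kernel_eq [IsDomain R] {p q S T : R[X]} {k b γ η γ' η' : R} (hq : q.Monic)
    (hp : p ≠ 0) (hpq : p.natDegree < q.natDegree) (hb : b ≠ 0)
    (hS : (X - C k) * S = q - C b * p)
    (h : T + C η * ((X - C k) * S) = (X - C γ) * q)
    (h' : T + C η' * ((X - C k) * S) = (X - C γ') * q) : γ' = γ ∧ η' = η := by
  have hdiff : C (η' - η - γ + γ') * q = C ((η' - η) * b) * p := by
    simp only [C_sub, C_add, C_mul]
    linear_combination h' - h - (C η' - C η) * hS
  obtain ⟨hγη, hηb⟩ := eq_zero_of_C_mul_eq_C_mul hq hp hpq hdiff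
  have hηη : η' = η := sub_eq_zero.mp ((mul_eq_zero.mp hηb).resolve_right hb)
  refine ⟨?_, hηη⟩
  rw [hηη] at hγη
  linear_combination hγη

end CommRing

lemma cpx_three_term {p q r : ℝ[X]} {a b : ℝ} (h : X * q = r + C a * q + C b * p) :
    X * cpx q = cpx r + C (a : ℂ) * cpx q + C (b : ℂ) * cpx p := by
  simpa [cpx] using congrArg (Polynomial.map (algebraMap ℝ ℂ)) h

lemma Polynomial.Monic.complexify {p : ℝ[X]} (hp : p.Monic) : (cpx p).Monic :=
  hp.map _

lemma Polynomial.Monic.natDegree_complexify {p : ℝ[X]} (hp : p.Monic) :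
    (cpx p).natDegree = p.natDegree :=
  hp.natDegree_map _

theorem stmt_4_general
    (P : ℕ → Polynomial ℝ)
    (hmonic : ∀ n, (P n).Monic)
    (hdeg : ∀ n, (P n).natDegree = n)
    (c lam : ℕ → ℝ)
    (hrec : ∀ n, 1 ≤ n → X * P n =
      P (n + 1) + Polynomial.C (c (n + 1)) * P n + Polynomial.C (lam (n + 1)) * P (n - 1))
    (k1 k2 : ℂ)
    (hk2 : ∀ n, (cpx (P n)).eval k2 ≠ 0)
    (Pstar1 : ℕ → Polynomial ℂ)
    (hPstar1 : ∀ n, (X - Polynomial.C k1) * Pstar1 n =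
      cpx (P (n + 1)) -
        Polynomial.C ((cpx (P (n + 1))).eval k1 / (cpx (P n)).eval k1) * cpx (P n))
    (Pstar2 : ℕ → Polynomial ℂ)
    (hPstar2 : ∀ n, (X - Polynomial.C k2) * Pstar2 n =
      cpx (P (n + 1)) -
        Polynomial.C ((cpx (P (n + 1))).eval k2 / (cpx (P n)).eval k2) * cpx (P n))
    (B : ℕ → ℂ) :
    ∀ n : ℕ, ∀ η γ : ℂ,
      η = -((lam (n + 2) : ℂ) +
            B (n + 1) * ((cpx (P (n + 1))).eval k1 / (cpx (P n)).eval k1)) *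
          ((cpx (P n)).eval k2 / (cpx (P (n + 1))).eval k2) →
      γ = (c (n + 2) : ℂ) + (cpx (P (n + 2))).eval k1 / (cpx (P (n + 1))).eval k1 -
            B (n + 1) - η →
      ((X - Polynomial.C k1) * (Pstar1 (n + 1) + Polynomial.C (B (n + 1)) * Pstar1 n) +
          Polynomial.C η * ((X - Polynomial.C k2) * Pstar2 n) =
        (X - Polynomial.C γ) * cpx (P (n + 1))) ∧
      ∀ γ' η' : ℂ,
        ((X - Polynomial.C k1) * (Pstar1 (n + 1) + Polynomial.C (B (n + 1)) * Pstar1 n) +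
            Polynomial.C η' * ((X - Polynomial.C k2) * Pstar2 n) =
          (X - Polynomial.C γ') * cpx (P (n + 1))) →
        γ' = γ ∧ η' = η := by
  intro n η γ hη hγ
  have hb : (cpx (P (n + 1))).eval k2 / (cpx (P n)).eval k2 ≠ 0 :=
    div_ne_zero (hk2 (n + 1)) (hk2 n)
  have hηb : η * ((cpx (P (n + 1))).eval k2 / (cpx (P n)).eval k2) =
      -((lam (n + 2) : ℂ) + B (n + 1) * ((cpx (P (n + 1))).eval k1 / (cpx (P n)).eval k1)) := by
    rw [hη, mul_assoc, div_mul_div_cancel₀' (hk2 n), div_self (hk2 (n + 1)), mul_one]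
  have hexists := X_sub_C_mul_add_C_mul_kernel_eq (cpx_three_term (hrec (n + 1) (by omega)))
    (hPstar1 n) (hPstar1 (n + 1)) (hPstar2 n) hηb hγ
  refine ⟨hexists, fun γ' η' h' => ?_⟩
  refine eq_of_add_C_mul_kernel_eq (hmonic (n + 1)).complexify
    (hmonic n).complexify.ne_zero ?_ hb (hPstar2 n) hexists h'
  rw [(hmonic n).natDegree_complexify, (hmonic (n + 1)).natDegree_complexify, hdeg, hdeg]
  omega

/-- With `P` the monic OPS of a positive definite moment functional `𝓛`,
kernel polynomials `Pstar1` at `k₁` and `Pstar2` at `k₂`, and the monic quasi-type kernel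
polynomial of order one `T*_{n+1}(k₁;x) = P*_{n+1}(k₁;x) + B_{n+1} P*_n(k₁;x)`: with
`η_n := −(λ_{n+2} + B_{n+1} P_{n+1}(k₁)/P_n(k₁)) P_n(k₂)/P_{n+1}(k₂)` and
`γ_n := c_{n+2} + P_{n+2}(k₁)/P_{n+1}(k₁) − B_{n+1} − η_n`, for every `n` the identity
`(x − k₁) T*_{n+1}(k₁;x) + η_n (x − k₂) P*_n(k₂;x) = (x − γ_n) P_{n+1}(x)` holds, and
`(γ_n, η_n)` is the unique pair of constants with this property. -/
theorem stmt_4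
    (L : Polynomial ℝ →ₗ[ℝ] ℝ)
    (hposdef : ∀ p : Polynomial ℝ, p ≠ 0 → 0 < L (p ^ 2))
    (P : ℕ → Polynomial ℝ)
    (hmonic : ∀ n, (P n).Monic)
    (hdeg : ∀ n, (P n).natDegree = n)
    (horth : ∀ m n, m ≠ n → L (P m * P n) = 0)
    (c lam : ℕ → ℝ)
    (hP0 : P 0 = 1)
    (hP1 : P 1 = X - Polynomial.C (c 1))
    (hrec : ∀ n, 1 ≤ n → X * P n =
      P (n + 1) + Polynomial.C (c (n + 1)) * P n + Polynomial.C (lam (n + 1)) * P (n - 1))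
    (hlampos : ∀ n, 1 ≤ n → 0 < lam (n + 1))
    (k1 k2 : ℂ)
    (hk1 : ∀ n, (cpx (P n)).eval k1 ≠ 0)
    (hk2 : ∀ n, (cpx (P n)).eval k2 ≠ 0)
    (Pstar1 : ℕ → Polynomial ℂ)
    (hPstar1 : ∀ n, (X - Polynomial.C k1) * Pstar1 n =
      cpx (P (n + 1)) -
        Polynomial.C ((cpx (P (n + 1))).eval k1 / (cpx (P n)).eval k1) * cpx (P n))
    (Pstar2 : ℕ → Polynomial ℂ)
    (hPstar2 : ∀ n, (X - Polynomial.C k2) * Pstar2 n =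
      cpx (P (n + 1)) -
        Polynomial.C ((cpx (P (n + 1))).eval k2 / (cpx (P n)).eval k2) * cpx (P n))
    (B : ℕ → ℂ) :
    ∀ n : ℕ, ∀ η γ : ℂ,
      η = -((lam (n + 2) : ℂ) +
            B (n + 1) * ((cpx (P (n + 1))).eval k1 / (cpx (P n)).eval k1)) *
          ((cpx (P n)).eval k2 / (cpx (P (n + 1))).eval k2) →
      γ = (c (n + 2) : ℂ) + (cpx (P (n + 2))).eval k1 / (cpx (P (n + 1))).eval k1 -
            B (n + 1) - η →
      ((X - Polynomial.C k1) * (Pstar1 (n + 1) + Polynomial.C (B (n + 1)) * Pstar1 n) +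
          Polynomial.C η * ((X - Polynomial.C k2) * Pstar2 n) =
        (X - Polynomial.C γ) * cpx (P (n + 1))) ∧
      ∀ γ' η' : ℂ,
        ((X - Polynomial.C k1) * (Pstar1 (n + 1) + Polynomial.C (B (n + 1)) * Pstar1 n) +
            Polynomial.C η' * ((X - Polynomial.C k2) * Pstar2 n) =
          (X - Polynomial.C γ') * cpx (P (n + 1))) →
        γ' = γ ∧ η' = η :=
  stmt_4_general P hmonic hdeg c lam hrec k1 k2 hk2 Pstar1 hPstar1 Pstar2 hPstar2 B
end

section
/- Let μ be a positive Borel measure on ℝ with infinite support and finite moments of all orders, {P_n} its monic orthogonal polynomials with three-term recurrence coefficients c_{n+1}, λ_{n+1}, and let k ∈ ℝ with dist(k, supp μ) > 0. Set q_n := ∫ P_n(x)/(k − x) dμ(x), assume q_n ≠ 0 for all n ≥ 0, put A_n := −q_n/q_{n−1} for n ≥ 1, and define the Geronimus-transformed monic polynomials 𝑃̃_n(k;x) := P_n(x) + A_n P_{n−1}(x). Then for every n ≥ 1 the polynomial identity (x − k) P_n(x) = 𝑃̃_{n+1}(k;x) + (λ_{n+1}/A_n) 𝑃̃_n(k;x)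 holds, i.e. P_n(x) = (x − k)^{−1}[𝑃̃_{n+1}(k;x) − (λ_{n+1} q_{n−1}/q_n) 𝑃̃_n(k;x)]. -/
open MeasureTheory Polynomial

/-!
Dividing the three-term recurrence by `k - x` and integrating turns it into the same
recurrence for the Cauchy transforms, `(k - c_{n+1}) q_n = q_{n+1} + λ_{n+1} q_{n-1}`, because
`x / (k - x) = k / (k - x) - 1` and `∫ P_n dμ = 0` for `n ≥ 1`. Rewritten in terms of
`A_n = -q_n / q_{n-1}` this reads `c_{n+1} - k = A_{n+1} + λ_{n+1} / A_n`, and substituting it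
into `(X - k) P_n = P_{n+1} + (c_{n+1} - k) P_n + λ_{n+1} P_{n-1}` regroups the right-hand side
as `P̃_{n+1} + (λ_{n+1} / A_n) P̃_n`.
-/

section CauchyTransform

variable {μ : Measure ℝ} {k : ℝ}

theorem Polynomial.integrable_eval_of_integrable_pow
    (hmom : ∀ m : ℕ, Integrable (fun x : ℝ => x ^ m) μ) (p : ℝ[X]) :
    Integrable (fun x => p.eval x) μ := by
  induction p using Polynomial.induction_on' with
  | add p q hp hq => simp only [eval_add]; exact hp.add hq
  | monomial m a => simpa only [eval_monomial] using (hmom m).const_mul a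

theorem ae_ne_of_notMem_support (hk : k ∉ μ.support) : ∀ᵐ x ∂μ, x ≠ k := by
  filter_upwards [Measure.support_mem_ae] with x hx
  rintro rfl
  exact hk hx

theorem integral_mul_div_sub (hk : ∀ᵐ x ∂μ, x ≠ k) {f : ℝ → ℝ} (hf : Integrable f μ)
    (hfk : Integrable (fun x => f x / (k - x)) μ) :
    ∫ x, x * f x / (k - x) ∂μ = k * ∫ x, f x / (k - x) ∂μ - ∫ x, f x ∂μ := by
  have hsplit : (fun x => x * f x / (k - x)) =ᵐ[μ] fun x => k * (f x / (k - x)) - f x := by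
    filter_upwards [hk] with x hx
    have hkx : k - x ≠ 0 := sub_ne_zero.mpr hx.symm
    field_simp
    ring
  rw [integral_congr_ae hsplit, integral_sub (hfk.const_mul k) hf, integral_const_mul]

theorem sub_mul_integral_div_sub_of_X_mul_eq (hk : ∀ᵐ x ∂μ, x ≠ k) {p r s : ℝ[X]} {a b : ℝ}
    (hp : Integrable (fun x => p.eval x) μ) (hp_zero : ∫ x, p.eval x ∂μ = 0)
    (hpk : Integrable (fun x => p.eval x / (k - x)) μ)
    (hrk : Integrable (fun x => r.eval x / (k - x)) μ)
    (hsk : Integrable (fun x => s.eval x / (k - x)) μ)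
    (hrec : X * p = r + C a * p + C b * s) :
    (k - a) * ∫ x, p.eval x / (k - x) ∂μ
      = ∫ x, r.eval x / (k - x) ∂μ + b * ∫ x, s.eval x / (k - x) ∂μ := by
  have hrec_eval (x : ℝ) : x * p.eval x / (k - x)
      = r.eval x / (k - x) + a * (p.eval x / (k - x)) + b * (s.eval x / (k - x)) := by
    have := congrArg (eval x) hrec
    simp only [eval_mul, eval_X, eval_add, eval_C] at this
    rw [this]
    ring
  have hintegral := integral_mul_div_sub hk hp hpk
  simp only [hrec_eval, hp_zero, sub_zero] at hintegral
  have hrpk : Integrable (fun x => r.eval x / (k - x) + a * (p.eval x / (k - x))) μ :=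
    hrk.add (hpk.const_mul a)
  rw [integral_add hrpk (hsk.const_mul b), integral_add hrk (hpk.const_mul a),
    integral_const_mul, integral_const_mul] at hintegral
  linarith

end CauchyTransform

theorem sub_eq_neg_div_add_div_neg_div {a b k q₀ q₁ q₂ : ℝ} (hq₁ : q₁ ≠ 0)
    (hrec : (k - a) * q₁ = q₂ + b * q₀) :
    a - k = -(q₂ / q₁) + b / -(q₁ / q₀) := by
  rw [div_neg, div_div_eq_mul_div, ← neg_add, ← add_div, ← hrec, mul_div_cancel_right₀ _ hq₁]
  ring

theorem X_sub_C_mul_eq_of_X_mul_eq {p r s : ℝ[X]} {a b k α β : ℝ}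
    (hrec : X * p = r + C a * p + C b * s) (hα : α ≠ 0) (hcoef : a - k = β + b / α) :
    (X - C k) * p = (r + C β * p) + C (b / α) * (p + C α * s) := by
  have hb : C b = C (b / α) * C α := by rw [← C_mul, div_mul_cancel₀ _ hα]
  rw [sub_mul, hrec, show a = k + β + b / α by linarith, C_add, C_add, hb]
  ring

theorem stmt_6_general
    (μ : Measure ℝ)
    (hmom : ∀ m : ℕ, Integrable (fun x : ℝ => x ^ m) μ)
    (P : ℕ → Polynomial ℝ)
    (horth : ∀ m n, m ≠ n → ∫ x, (P m).eval x * (P n).eval x ∂μ = 0)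
    (c lam : ℕ → ℝ)
    (hP0 : P 0 = 1)
    (hrec : ∀ n, 1 ≤ n → X * P n =
      P (n + 1) + Polynomial.C (c (n + 1)) * P n + Polynomial.C (lam (n + 1)) * P (n - 1))
    (k : ℝ)
    (hdist : ∃ ε > 0, ∀ x ∈ {x : ℝ | ∀ U ∈ nhds x, 0 < μ U}, ε ≤ |k - x|)
    (hqint : ∀ n, Integrable (fun x : ℝ => (P n).eval x / (k - x)) μ)
    (q : ℕ → ℝ)
    (hq : ∀ n, q n = ∫ x, (P n).eval x / (k - x) ∂μ)
    (hqne : ∀ n, q n ≠ 0)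
    (A : ℕ → ℝ)
    (hA : ∀ n, 1 ≤ n → A n = -(q n / q (n - 1)))
    (Pt : ℕ → Polynomial ℝ)
    (hPt : ∀ n, 1 ≤ n → Pt n = P n + Polynomial.C (A n) * P (n - 1)) :
    ∀ n, 1 ≤ n →
      (X - Polynomial.C k) * P n = Pt (n + 1) + Polynomial.C (lam (n + 1) / A n) * Pt n := by
  intro n hn
  have hk : k ∉ μ.support := by
    obtain ⟨ε, hε, hsupp⟩ := hdist
    intro hk
    have := hsupp k ((Measure.mem_support_iff_forall k).mp hk)
    rw [sub_self, abs_zero] at this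
    linarith
  have hqrec : (k - c (n + 1)) * q n = q (n + 1) + lam (n + 1) * q (n - 1) := by
    simp only [hq]
    refine sub_mul_integral_div_sub_of_X_mul_eq (ae_ne_of_notMem_support hk)
      (integrable_eval_of_integrable_pow hmom _) ?_ (hqint n) (hqint _) (hqint _) (hrec n hn)
    simpa [hP0] using horth n 0 (by omega)
  have hAn : A n ≠ 0 := by
    rw [hA n hn]
    exact neg_ne_zero.mpr (div_ne_zero (hqne n) (hqne _))
  rw [hPt (n + 1) (by omega), hPt n hn, Nat.add_sub_cancel]
  refine X_sub_C_mul_eq_of_X_mul_eq (hrec n hn) hAn ?_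
  rw [hA (n + 1) (by omega), hA n hn, Nat.add_sub_cancel]
  exact sub_eq_neg_div_add_div_neg_div (hqne n) hqrec

/-- Let `μ` be a positive Borel measure on `ℝ` with infinite support and
finite moments of all orders, `P` its monic orthogonal polynomials with three-term
recurrence coefficients `c`, `λ`, and `k ∈ ℝ` with `dist(k, supp μ) > 0`.  With
`q n := ∫ P_n(x)/(k − x) dμ(x)` all nonzero, `A n := −q n / q (n−1)` and the
Geronimus-transformed monic polynomials `P̃_n := P_n + A_n P_{n−1}`, for every `n ≥ 1` one
has the polynomial identity `(x − k) P_n(x) = P̃_{n+1}(x) + (λ_{n+1}/A_n) P̃_n(x)`. -/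
theorem stmt_6
    (μ : Measure ℝ)
    (hinf : {x : ℝ | ∀ U ∈ nhds x, 0 < μ U}.Infinite)
    (hmom : ∀ m : ℕ, Integrable (fun x : ℝ => x ^ m) μ)
    (P : ℕ → Polynomial ℝ)
    (hmonic : ∀ n, (P n).Monic)
    (hdeg : ∀ n, (P n).natDegree = n)
    (horth : ∀ m n, m ≠ n → ∫ x, (P m).eval x * (P n).eval x ∂μ = 0)
    (c lam : ℕ → ℝ)
    (hP0 : P 0 = 1)
    (hP1 : P 1 = X - Polynomial.C (c 1))
    (hrec : ∀ n, 1 ≤ n → X * P n =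
      P (n + 1) + Polynomial.C (c (n + 1)) * P n + Polynomial.C (lam (n + 1)) * P (n - 1))
    (hlampos : ∀ n, 1 ≤ n → 0 < lam (n + 1))
    (k : ℝ)
    (hdist : ∃ ε > 0, ∀ x ∈ {x : ℝ | ∀ U ∈ nhds x, 0 < μ U}, ε ≤ |k - x|)
    (hqint : ∀ n, Integrable (fun x : ℝ => (P n).eval x / (k - x)) μ)
    (q : ℕ → ℝ)
    (hq : ∀ n, q n = ∫ x, (P n).eval x / (k - x) ∂μ)
    (hqne : ∀ n, q n ≠ 0)
    (A : ℕ → ℝ)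
    (hA : ∀ n, 1 ≤ n → A n = -(q n / q (n - 1)))
    (Pt : ℕ → Polynomial ℝ)
    (hPt : ∀ n, 1 ≤ n → Pt n = P n + Polynomial.C (A n) * P (n - 1)) :
    ∀ n, 1 ≤ n →
      (X - Polynomial.C k) * P n = Pt (n + 1) + Polynomial.C (lam (n + 1) / A n) * Pt n :=
  stmt_6_general μ hmom P horth c lam hP0 hrec k hdist hqint q hq hqne A hA Pt hPt
end

section
/- Fix k₂ ∈ ℂ with P_n(k₂) ≠ 0 for all n, fix n ≥ 1 and constants A_{n+1}, B̃_n ∈ ℂ with λ_{n+1} + B̃_n P_n(k₂)/P_{n−1}(k₂) ≠ 0. Let 𝑃̃_{n+1}(x) := P_{n+1}(x) + A_{n+1} P_n(x) (a Geronimus-transformed monic polynomial) and T*_n(k₂;x) := P*_n(k₂;x) + B̃_n P*_{n−1}(k₂;x) (a monic quasi-type kernel polynomial of order one). Define η_n := −λ_{n+1}/(λ_{n+1} + B̃_n P_n(k₂)/P_{n−1}(k₂)), α_n := 1 + η_n, and γ_n := c_{n+1}(1 + η_n) − A_{n+1} + η_n P_{n+1}(k₂)/P_n(k₂) − η_n B̃_n.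 Then the polynomial identity 𝑃̃_{n+1}(x) + η_n (x − k₂) T*_n(k₂;x) = (α_n x − γ_n) P_n(x) holds. -/
open Polynomial

section QuasiKernel

variable {K : Type*} [Field K] (Q S : ℕ → K[X]) (k : K)

theorem X_sub_C_mul_quasiKernel
    (hS : ∀ m, (X - C k) * S m = Q (m + 1) - C ((Q (m + 1)).eval k / (Q m).eval k) * Q m)
    {m : ℕ} (hm : 1 ≤ m) (B : K) :
    (X - C k) * (S m + C B * S (m - 1)) =
      Q (m + 1) + C (B - (Q (m + 1)).eval k / (Q m).eval k) * Q m -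
        C (B * ((Q m).eval k / (Q (m - 1)).eval k)) * Q (m - 1) := by
  have hprev := hS (m - 1)
  rw [Nat.sub_add_cancel hm] at hprev
  simp only [map_sub, map_mul]
  linear_combination hS m + C B * hprev

theorem one_add_mul_add_mul_eq_zero {l b η : K} (hden : l + b ≠ 0) (hη : η = -(l / (l + b))) :
    (1 + η) * l + η * b = 0 := by
  subst hη
  field_simp
  ring

/-- `η` is exactly the multiplier that cancels the `Q_{n-1}` term left over after
eliminating `Q_{n+1}` with the recurrence. -/
theorem geronimus_add_quasiKernel_eq (c l A B η : K) {n : ℕ} (hn : 1 ≤ n)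
    (hrec : X * Q n = Q (n + 1) + C c * Q n + C l * Q (n - 1))
    (hS : ∀ m, (X - C k) * S m = Q (m + 1) - C ((Q (m + 1)).eval k / (Q m).eval k) * Q m)
    (hden : l + B * ((Q n).eval k / (Q (n - 1)).eval k) ≠ 0)
    (hη : η = -(l / (l + B * ((Q n).eval k / (Q (n - 1)).eval k)))) :
    Q (n + 1) + C A * Q n + C η * ((X - C k) * (S n + C B * S (n - 1))) =
      (C (1 + η) * X - C (c * (1 + η) - A +
        η * ((Q (n + 1)).eval k / (Q n).eval k) - η * B)) * Q n := by
  have hcancel := congrArg C (one_add_mul_add_mul_eq_zero hden hη)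
  rw [X_sub_C_mul_quasiKernel Q S k hS hn B]
  simp only [map_add, map_sub, map_mul, map_one, map_zero] at hcancel ⊢
  linear_combination -(1 + C η) * hrec - Q (n - 1) * hcancel

end QuasiKernel

theorem stmt_7_general
    (P : ℕ → Polynomial ℝ)
    (c lam : ℕ → ℝ)
    (hrec : ∀ n, 1 ≤ n → X * P n =
      P (n + 1) + Polynomial.C (c (n + 1)) * P n + Polynomial.C (lam (n + 1)) * P (n - 1))
    (k2 : ℂ)
    (Pstar2 : ℕ → Polynomial ℂ)
    (hPstar2 : ∀ n, (X - Polynomial.C k2) * Pstar2 n =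
      cpx (P (n + 1)) -
        Polynomial.C ((cpx (P (n + 1))).eval k2 / (cpx (P n)).eval k2) * cpx (P n))
    (n : ℕ) (hn : 1 ≤ n)
    (A B : ℂ)
    (hden : (lam (n + 1) : ℂ) +
        B * ((cpx (P n)).eval k2 / (cpx (P (n - 1))).eval k2) ≠ 0) :
    ∀ η α γ : ℂ,
      η = -((lam (n + 1) : ℂ) /
            ((lam (n + 1) : ℂ) +
              B * ((cpx (P n)).eval k2 / (cpx (P (n - 1))).eval k2))) →
      α = 1 + η →
      γ = (c (n + 1) : ℂ) * (1 + η) - A +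
            η * ((cpx (P (n + 1))).eval k2 / (cpx (P n)).eval k2) - η * B →
      cpx (P (n + 1)) + Polynomial.C A * cpx (P n) +
          Polynomial.C η * ((X - Polynomial.C k2) *
            (Pstar2 n + Polynomial.C B * Pstar2 (n - 1))) =
        (Polynomial.C α * X - Polynomial.C γ) * cpx (P n) := by
  intro η α γ hη hα hγ
  subst hα hγ
  have hrecC : X * cpx (P n) = cpx (P (n + 1)) + C (c (n + 1) : ℂ) * cpx (P n) +
      C (lam (n + 1) : ℂ) * cpx (P (n - 1)) := by
    simpa [cpx] using congrArg (map (algebraMap ℝ ℂ)) (hrec n hn)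
  exact geronimus_add_quasiKernel_eq (fun m => cpx (P m)) Pstar2 k2 _ _ A B η hn hrecC
    hPstar2 hden hη

/-- With `P` the monic OPS of a positive definite moment functional,
`Pstar2` the monic kernel polynomials at `k₂`, the Geronimus-transformed monic polynomial
`P̃_{n+1} := P_{n+1} + A_{n+1} P_n` and the monic quasi-type kernel polynomial of order one
`T*_n(k₂;x) := P*_n(k₂;x) + B̃_n P*_{n−1}(k₂;x)` (`n ≥ 1`): with
`η_n := −λ_{n+1}/(λ_{n+1} + B̃_n P_n(k₂)/P_{n−1}(k₂))`, `α_n := 1 + η_n` and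
`γ_n := c_{n+1}(1 + η_n) − A_{n+1} + η_n P_{n+1}(k₂)/P_n(k₂) − η_n B̃_n`, the identity
`P̃_{n+1}(x) + η_n (x − k₂) T*_n(k₂;x) = (α_n x − γ_n) P_n(x)` holds. -/
theorem stmt_7
    (L : Polynomial ℝ →ₗ[ℝ] ℝ)
    (hposdef : ∀ p : Polynomial ℝ, p ≠ 0 → 0 < L (p ^ 2))
    (P : ℕ → Polynomial ℝ)
    (hmonic : ∀ n, (P n).Monic)
    (hdeg : ∀ n, (P n).natDegree = n)
    (horth : ∀ m n, m ≠ n → L (P m * P n) = 0)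
    (c lam : ℕ → ℝ)
    (hP0 : P 0 = 1)
    (hP1 : P 1 = X - Polynomial.C (c 1))
    (hrec : ∀ n, 1 ≤ n → X * P n =
      P (n + 1) + Polynomial.C (c (n + 1)) * P n + Polynomial.C (lam (n + 1)) * P (n - 1))
    (hlampos : ∀ n, 1 ≤ n → 0 < lam (n + 1))
    (k2 : ℂ)
    (hk2 : ∀ n, (cpx (P n)).eval k2 ≠ 0)
    (Pstar2 : ℕ → Polynomial ℂ)
    (hPstar2 : ∀ n, (X - Polynomial.C k2) * Pstar2 n =
      cpx (P (n + 1)) -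
        Polynomial.C ((cpx (P (n + 1))).eval k2 / (cpx (P n)).eval k2) * cpx (P n))
    (n : ℕ) (hn : 1 ≤ n)
    (A B : ℂ)
    (hden : (lam (n + 1) : ℂ) +
        B * ((cpx (P n)).eval k2 / (cpx (P (n - 1))).eval k2) ≠ 0) :
    ∀ η α γ : ℂ,
      η = -((lam (n + 1) : ℂ) /
            ((lam (n + 1) : ℂ) +
              B * ((cpx (P n)).eval k2 / (cpx (P (n - 1))).eval k2))) →
      α = 1 + η →
      γ = (c (n + 1) : ℂ) * (1 + η) - A +
            η * ((cpx (P (n + 1))).eval k2 / (cpx (P n)).eval k2) - η * B →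
      cpx (P (n + 1)) + Polynomial.C A * cpx (P n) +
          Polynomial.C η * ((X - Polynomial.C k2) *
            (Pstar2 n + Polynomial.C B * Pstar2 (n - 1))) =
        (Polynomial.C α * X - Polynomial.C γ) * cpx (P n) :=
  stmt_7_general P c lam hrec k2 Pstar2 hPstar2 n hn A B hden
end

section
/- Fix k₁, k₂ ∈ ℂ with P_n(k₁) ≠ 0 and P_n(k₂) ≠ 0 for all n, fix n ≥ 1 and constants T_n, B̃_n ∈ ℂ with λ_{n+1} + B̃_n P_n(k₂)/P_{n−1}(k₂) ≠ 0. Let 𝑃̂_n(x) := P_n(x) − T_n P*_{n−1}(k₁;x) (an Uvarov-transformed monic polynomial) and T*_n(k₂;x) := P*_n(k₂;x) + B̃_n P*_{n−1}(k₂;x) (a monic quasi-type kernel polynomial of order one). Define η_n := T_n (P_n(k₁)/P_{n−1}(k₁)) / (B̃_n P_n(k₂)/P_{n−1}(k₂) + λ_{n+1}), α_n := 1 + η_n, and β_n := k₁ + T_n + (c_{n+1} − B̃_n + P_{n+1}(k₂)/P_n(k₂)) η_n. Then the polynomial identity (x − k₁) 𝑃̂_n(x) + η_n (x − k₂) T*_n(k₂;x)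 = (α_n x − β_n) P_n(x) holds. -/
/-!
Expanding both kernel polynomials through their defining relations writes the left-hand side
as a combination of `P_{n-1}`, `P_n`, `P_{n+1}`. Eliminating `P_{n+1}` with the three-term
recurrence leaves `P_{n-1}` with coefficient `T_n r₁ - η_n (B̃_n r₂ + λ_{n+1})`, where
`r_i = P_n(k_i)/P_{n-1}(k_i)`, and `η_n` is chosen exactly so that this vanishes.
-/

open Polynomial

theorem X_sub_C_mul_uvarov_add_C_mul_quasiKernel_eq {R : Type*} [CommRing R]
    {p₀ p₁ p₂ K₁ K₂ K₂' : R[X]} {k₁ k₂ c lam r₁ r₂ s T B η : R}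
    (hrec : X * p₁ = p₂ + C c * p₁ + C lam * p₀)
    (hK₁ : (X - C k₁) * K₁ = p₁ - C r₁ * p₀)
    (hK₂ : (X - C k₂) * K₂ = p₁ - C r₂ * p₀)
    (hK₂' : (X - C k₂) * K₂' = p₂ - C s * p₁)
    (hη : η * (B * r₂ + lam) = T * r₁) :
    (X - C k₁) * (p₁ - C T * K₁) + C η * ((X - C k₂) * (K₂' + C B * K₂)) =
      (C (1 + η) * X - C (k₁ + T + (c - B + s) * η)) * p₁ := by
  have hηC := congrArg C hη
  simp only [map_add, map_sub, map_mul, map_one] at hηC ⊢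
  linear_combination -C T * hK₁ + C η * hK₂' + C η * C B * hK₂ - C η * hrec - p₀ * hηC

theorem X_mul_cpx_eq_of_X_mul_eq {p q r : ℝ[X]} {c lam : ℝ}
    (h : X * q = r + C c * q + C lam * p) :
    X * cpx q = cpx r + C (c : ℂ) * cpx q + C (lam : ℂ) * cpx p := by
  simpa [cpx, Complex.coe_algebraMap] using congrArg (map (algebraMap ℝ ℂ)) h

theorem stmt_8_general
    (P : ℕ → Polynomial ℝ)
    (c lam : ℕ → ℝ)
    (hrec : ∀ n, 1 ≤ n → X * P n =
      P (n + 1) + Polynomial.C (c (n + 1)) * P n + Polynomial.C (lam (n + 1)) * P (n - 1))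
    (k1 k2 : ℂ)
    (Pstar1 : ℕ → Polynomial ℂ)
    (hPstar1 : ∀ n, (X - Polynomial.C k1) * Pstar1 n =
      cpx (P (n + 1)) -
        Polynomial.C ((cpx (P (n + 1))).eval k1 / (cpx (P n)).eval k1) * cpx (P n))
    (Pstar2 : ℕ → Polynomial ℂ)
    (hPstar2 : ∀ n, (X - Polynomial.C k2) * Pstar2 n =
      cpx (P (n + 1)) -
        Polynomial.C ((cpx (P (n + 1))).eval k2 / (cpx (P n)).eval k2) * cpx (P n))
    (n : ℕ) (hn : 1 ≤ n)
    (T B : ℂ)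
    (hden : B * ((cpx (P n)).eval k2 / (cpx (P (n - 1))).eval k2) +
        (lam (n + 1) : ℂ) ≠ 0) :
    ∀ η α β : ℂ,
      η = T * ((cpx (P n)).eval k1 / (cpx (P (n - 1))).eval k1) /
            (B * ((cpx (P n)).eval k2 / (cpx (P (n - 1))).eval k2) +
              (lam (n + 1) : ℂ)) →
      α = 1 + η →
      β = k1 + T + ((c (n + 1) : ℂ) - B +
            (cpx (P (n + 1))).eval k2 / (cpx (P n)).eval k2) * η →
      (X - Polynomial.C k1) * (cpx (P n) - Polynomial.C T * Pstar1 (n - 1)) +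
          Polynomial.C η * ((X - Polynomial.C k2) *
            (Pstar2 n + Polynomial.C B * Pstar2 (n - 1))) =
        (Polynomial.C α * X - Polynomial.C β) * cpx (P n) := by
  intro η α β hη hα hβ
  obtain ⟨m, rfl⟩ : ∃ m, n = m + 1 := ⟨n - 1, by omega⟩
  have hrec' := hrec (m + 1) hn
  rw [Nat.add_sub_cancel] at hrec' hη hden ⊢
  subst hα hβ
  exact X_sub_C_mul_uvarov_add_C_mul_quasiKernel_eq (X_mul_cpx_eq_of_X_mul_eq hrec') (hPstar1 m) (hPstar2 m)
    (hPstar2 (m + 1)) (by rw [hη, div_mul_cancel₀ _ hden])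

/-- With `P` the monic OPS of a positive definite moment functional,
kernel polynomials `Pstar1` at `k₁` and `Pstar2` at `k₂`, the Uvarov-transformed monic
polynomial `P̂_n := P_n − T_n P*_{n−1}(k₁;·)` and the monic quasi-type kernel polynomial of
order one `T*_n(k₂;·) := P*_n(k₂;·) + B̃_n P*_{n−1}(k₂;·)` (`n ≥ 1`): with
`η_n := T_n (P_n(k₁)/P_{n−1}(k₁)) / (B̃_n P_n(k₂)/P_{n−1}(k₂) + λ_{n+1})`, `α_n := 1 + η_n`
and `β_n := k₁ + T_n + (c_{n+1} − B̃_n + P_{n+1}(k₂)/P_n(k₂)) η_n`, the identity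
`(x − k₁) P̂_n(x) + η_n (x − k₂) T*_n(k₂;x) = (α_n x − β_n) P_n(x)` holds. -/
theorem stmt_8
    (L : Polynomial ℝ →ₗ[ℝ] ℝ)
    (hposdef : ∀ p : Polynomial ℝ, p ≠ 0 → 0 < L (p ^ 2))
    (P : ℕ → Polynomial ℝ)
    (hmonic : ∀ n, (P n).Monic)
    (hdeg : ∀ n, (P n).natDegree = n)
    (horth : ∀ m n, m ≠ n → L (P m * P n) = 0)
    (c lam : ℕ → ℝ)
    (hP0 : P 0 = 1)
    (hP1 : P 1 = X - Polynomial.C (c 1))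
    (hrec : ∀ n, 1 ≤ n → X * P n =
      P (n + 1) + Polynomial.C (c (n + 1)) * P n + Polynomial.C (lam (n + 1)) * P (n - 1))
    (hlampos : ∀ n, 1 ≤ n → 0 < lam (n + 1))
    (k1 k2 : ℂ)
    (hk1 : ∀ n, (cpx (P n)).eval k1 ≠ 0)
    (hk2 : ∀ n, (cpx (P n)).eval k2 ≠ 0)
    (Pstar1 : ℕ → Polynomial ℂ)
    (hPstar1 : ∀ n, (X - Polynomial.C k1) * Pstar1 n =
      cpx (P (n + 1)) -
        Polynomial.C ((cpx (P (n + 1))).eval k1 / (cpx (P n)).eval k1) * cpx (P n))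
    (Pstar2 : ℕ → Polynomial ℂ)
    (hPstar2 : ∀ n, (X - Polynomial.C k2) * Pstar2 n =
      cpx (P (n + 1)) -
        Polynomial.C ((cpx (P (n + 1))).eval k2 / (cpx (P n)).eval k2) * cpx (P n))
    (n : ℕ) (hn : 1 ≤ n)
    (T B : ℂ)
    (hden : B * ((cpx (P n)).eval k2 / (cpx (P (n - 1))).eval k2) +
        (lam (n + 1) : ℂ) ≠ 0) :
    ∀ η α β : ℂ,
      η = T * ((cpx (P n)).eval k1 / (cpx (P (n - 1))).eval k1) /
            (B * ((cpx (P n)).eval k2 / (cpx (P (n - 1))).eval k2) +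
              (lam (n + 1) : ℂ)) →
      α = 1 + η →
      β = k1 + T + ((c (n + 1) : ℂ) - B +
            (cpx (P (n + 1))).eval k2 / (cpx (P n)).eval k2) * η →
      (X - Polynomial.C k1) * (cpx (P n) - Polynomial.C T * Pstar1 (n - 1)) +
          Polynomial.C η * ((X - Polynomial.C k2) *
            (Pstar2 n + Polynomial.C B * Pstar2 (n - 1))) =
        (Polynomial.C α * X - Polynomial.C β) * cpx (P n) :=
  stmt_8_general P c lam hrec k1 k2 Pstar1 hPstar1 Pstar2 hPstar2 n hn T B hden
end

section
/- Fix k₁, k₂, k₃ ∈ ℂ with P_n(k₁) ≠ 0, P_n(k₂) ≠ 0, and K_n(k₂,k₃) := Σ_{j=0}^{n} P_j(k₂)P_j(k₃)/(λ₁λ₂⋯λ_{j+1}) ≠ 0 for all n (equivalently P*_n(k₂;k₃) ≠ 0 for all n). Define the iterated kernel polynomials P*_n(k₂,k₃;x) := (x − k₃)^{−1}[P*_{n+1}(k₂;x) − (P*_{n+1}(k₂;k₃)/P*_n(k₂;k₃)) P*_n(k₂;x)]. Fix n ≥ 1 and let L̃_n, M̃_n ∈ ℂ satisfy L̃_n +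 M̃_n P_n(k₁)/(λ_{n+1} P_{n−1}(k₁)) = P_{n+2}(k₁)/P_{n+1}(k₁) − P_{n+2}(k₂)/P_{n+1}(k₂) − P*_{n+1}(k₂;k₃)/P*_n(k₂;k₃), and set S*_{n+1}(k₁;x) := P*_{n+1}(k₁;x) + L̃_n P*_n(k₁;x) + M̃_n P*_{n−1}(k₁;x) (a monic quasi-type kernel polynomial of order two). Then, with α_n := −M̃_n P_n(k₁)/(λ_{n+1} P_{n−1}(k₁)) and β_n := α_n c_{n+1} + L̃_n P_{n+1}(k₁)/P_n(k₁) − M̃_n + λ_{n+2} K_{n+1}(k₂,k₃)/K_n(k₂,k₃), the polynomial identity (x − k₁) S*_{n+1}(k₁;x) − (x − k₂)(x − k₃) P*_n(k₂,k₃;x) = (α_n x − β_n) P_n(x) holds. -/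
/-!
Expanding `S*_{n+1}(k₁;·)` and `P*_n(k₂,k₃;·)` through the defining relations of the kernel
polynomials, both sides of the identity become combinations of `P_{n-1}, …, P_{n+2}`, and
after one use of the recurrence the coefficients of `P_{n+1}` and `P_{n-1}` match by the choice
of `L̃_n, M̃_n, α_n`. The coefficient of `P_n` contains
`P*_{n+1}(k₂;k₃) / P*_n(k₂;k₃) · P_{n+1}(k₂) / P_n(k₂)`, which is `λ_{n+2} K_{n+1} / K_n` by the
Christoffel–Darboux representation `P_m(k₂) P*_m(k₂;x) = λ₁ ⋯ λ_{m+1} K_m(k₂,x)`.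
-/

open Polynomial

section ThreeTermRecurrence

variable {F : Type*} [Field F]

noncomputable def christoffelDarbouxSum (p : ℕ → F[X]) (l : ℕ → F) (a : F) (m : ℕ) : F[X] :=
  ∑ j ∈ Finset.range (m + 1), C ((p j).eval a / ∏ i ∈ Finset.range (j + 1), l (i + 1)) * p j

theorem eval_christoffelDarbouxSum (p : ℕ → F[X]) (l : ℕ → F) (a b : F) (m : ℕ) :
    (christoffelDarbouxSum p l a m).eval b = ∑ j ∈ Finset.range (m + 1),
      (p j).eval a * (p j).eval b / ∏ i ∈ Finset.range (j + 1), l (i + 1) := by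
  simp only [christoffelDarbouxSum, eval_finsetSum, eval_mul, eval_C, div_mul_eq_mul_div]

theorem X_sub_C_mul_christoffelDarbouxSum (p : ℕ → F[X]) (c l : ℕ → F) (a : F)
    (h0 : p 0 = 1) (h1 : p 1 = X - C (c 1))
    (hrec : ∀ m, X * p (m + 1) = p (m + 2) + C (c (m + 2)) * p (m + 1) + C (l (m + 2)) * p m)
    (hl : ∀ m, l (m + 2) ≠ 0) (m : ℕ) :
    (X - C a) * christoffelDarbouxSum p l a m =
      C ((p m).eval a / ∏ i ∈ Finset.range (m + 1), l (i + 1)) * p (m + 1) -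
        C ((p (m + 1)).eval a / ∏ i ∈ Finset.range (m + 1), l (i + 1)) * p m := by
  induction m with
  | zero =>
    simp only [christoffelDarbouxSum, zero_add, Finset.range_one, Finset.sum_singleton,
      Finset.prod_singleton, h0, h1, eval_one, eval_sub, eval_X, eval_C]
    rw [div_eq_mul_one_div (a - c 1)]
    simp only [C_mul, C_sub]
    ring
  | succ m ih =>
    set Λ := ∏ i ∈ Finset.range (m + 1), l (i + 1)
    set w := 1 / (Λ * l (m + 2))
    have hΛ : ∏ i ∈ Finset.range (m + 2), l (i + 1) = Λ * l (m + 2) := Finset.prod_range_succ _ _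
    -- with every coefficient a multiple of `w`, the step is a ring identity
    have hdivΛ (x : F) : x / Λ = x * l (m + 2) * w := by
      simp only [w]; field_simp [hl m]
    have hdivΛl (x : F) : x / (Λ * l (m + 2)) = x * w := div_eq_mul_one_div _ _
    have hrec_a := congrArg (fun y => C (eval a y)) (hrec m)
    simp only [eval_mul, eval_add, eval_X, eval_C, C_add, C_mul] at hrec_a
    rw [christoffelDarbouxSum, Finset.sum_range_succ, mul_add, ← christoffelDarbouxSum, ih, hΛ]
    simp only [hdivΛ, hdivΛl, C_mul]
    linear_combination (C ((p (m + 1)).eval a) * C w) * hrec m - (C w * p (m + 1)) * hrec_a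

theorem C_eval_mul_kernel_eq_christoffelDarbouxSum (p q : ℕ → F[X]) (c l : ℕ → F) (a : F)
    (h0 : p 0 = 1) (h1 : p 1 = X - C (c 1))
    (hrec : ∀ m, X * p (m + 1) = p (m + 2) + C (c (m + 2)) * p (m + 1) + C (l (m + 2)) * p m)
    (hl : ∀ i, l (i + 1) ≠ 0) (m : ℕ) (hpa : (p m).eval a ≠ 0)
    (hq : (X - C a) * q m = p (m + 1) - C ((p (m + 1)).eval a / (p m).eval a) * p m) :
    C ((p m).eval a) * q m =
      C (∏ i ∈ Finset.range (m + 1), l (i + 1)) * christoffelDarbouxSum p l a m := by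
  have hΛ : ∏ i ∈ Finset.range (m + 1), l (i + 1) ≠ 0 :=
    Finset.prod_ne_zero_iff.mpr fun i _ => hl i
  have hCD := X_sub_C_mul_christoffelDarbouxSum p c l a h0 h1 hrec (fun i => hl (i + 1)) m
  have e₁ := congrArg C (mul_div_cancel₀ ((p (m + 1)).eval a) hpa)
  have e₂ := congrArg C (mul_div_cancel₀ ((p m).eval a) hΛ)
  have e₃ := congrArg C (mul_div_cancel₀ ((p (m + 1)).eval a) hΛ)
  simp only [C_mul] at e₁ e₂ e₃
  apply mul_left_cancel₀ (X_sub_C_ne_zero a)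
  linear_combination C ((p m).eval a) * hq - C (∏ i ∈ Finset.range (m + 1), l (i + 1)) * hCD
    - p m * e₁ - p (m + 1) * e₂ + p m * e₃

theorem kernel_eval_ratio_eq (p q : ℕ → F[X]) (c l : ℕ → F) (a b : F)
    (h0 : p 0 = 1) (h1 : p 1 = X - C (c 1))
    (hrec : ∀ m, X * p (m + 1) = p (m + 2) + C (c (m + 2)) * p (m + 1) + C (l (m + 2)) * p m)
    (hl : ∀ i, l (i + 1) ≠ 0) (hpa : ∀ m, (p m).eval a ≠ 0)
    (hq : ∀ m, (X - C a) * q m = p (m + 1) - C ((p (m + 1)).eval a / (p m).eval a) * p m)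
    (m : ℕ) :
    (q (m + 1)).eval b / (q m).eval b * ((p (m + 1)).eval a / (p m).eval a) =
      l (m + 2) * ((christoffelDarbouxSum p l a (m + 1)).eval b /
        (christoffelDarbouxSum p l a m).eval b) := by
  have hΛ : ∏ i ∈ Finset.range (m + 1), l (i + 1) ≠ 0 :=
    Finset.prod_ne_zero_iff.mpr fun i _ => hl i
  have hkernel (j : ℕ) := congrArg (eval b)
    (C_eval_mul_kernel_eq_christoffelDarbouxSum p q c l a h0 h1 hrec hl j (hpa j) (hq j))
  have hm := hkernel m
  have hm' := hkernel (m + 1)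
  simp only [eval_mul, eval_C, Finset.prod_range_succ _ (m + 1)] at hm hm'
  rw [div_mul_div_comm, mul_comm ((q (m + 1)).eval b), mul_comm ((q m).eval b), hm, hm',
    mul_assoc, mul_div_mul_left _ _ hΛ, mul_div_assoc]

theorem quasiKernel_sub_iteratedKernel_eq (p q₁ q₂ : ℕ → F[X]) (q₁₂ : F[X])
    (c l ρ₁ ρ₂ : ℕ → F) (k₁ k₂ k₃ r L M α β : F) (m : ℕ)
    (hrec : X * p (m + 1) = p (m + 2) + C (c (m + 2)) * p (m + 1) + C (l (m + 2)) * p m)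
    (hq₁ : ∀ j, (X - C k₁) * q₁ j = p (j + 1) - C (ρ₁ j) * p j)
    (hq₂ : ∀ j, (X - C k₂) * q₂ j = p (j + 1) - C (ρ₂ j) * p j)
    (hq₁₂ : (X - C k₃) * q₁₂ = q₂ (m + 2) - C r * q₂ (m + 1))
    (hα : α = L - ρ₁ (m + 2) + ρ₂ (m + 2) + r)
    (hαl : α * l (m + 2) = -(M * ρ₁ m))
    (hβ : β = α * c (m + 2) + L * ρ₁ (m + 1) - M + r * ρ₂ (m + 1)) :
    (X - C k₁) * (q₁ (m + 2) + C L * q₁ (m + 1) + C M * q₁ m) -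
        (X - C k₂) * (X - C k₃) * q₁₂ =
      (C α * X - C β) * p (m + 1) := by
  have eα := congrArg C hα
  have eαl := congrArg C hαl
  have eβ := congrArg C hβ
  simp only [C_add, C_sub, C_mul, C_neg] at eα eαl eβ
  linear_combination hq₁ (m + 2) + C L * hq₁ (m + 1) + C M * hq₁ m - (X - C k₂) * hq₁₂
    - hq₂ (m + 2) + C r * hq₂ (m + 1) - C α * hrec
    - p (m + 2) * eα - p m * eαl + p (m + 1) * eβ

end ThreeTermRecurrence

theorem stmt_9_general
    (L : Polynomial ℝ →ₗ[ℝ] ℝ)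
    (hposdef : ∀ p : Polynomial ℝ, p ≠ 0 → 0 < L (p ^ 2))
    (P : ℕ → Polynomial ℝ)
    (c lam : ℕ → ℝ)
    (hP0 : P 0 = 1)
    (hP1 : P 1 = X - Polynomial.C (c 1))
    (hrec : ∀ n, 1 ≤ n → X * P n =
      P (n + 1) + Polynomial.C (c (n + 1)) * P n + Polynomial.C (lam (n + 1)) * P (n - 1))
    (hlampos : ∀ n, 1 ≤ n → 0 < lam (n + 1))
    (hlam1 : lam 1 = L 1)
    (k1 k2 k3 : ℂ)
    (hk2 : ∀ n, (cpx (P n)).eval k2 ≠ 0)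
    (Pstar1 : ℕ → Polynomial ℂ)
    (hPstar1 : ∀ n, (X - Polynomial.C k1) * Pstar1 n =
      cpx (P (n + 1)) -
        Polynomial.C ((cpx (P (n + 1))).eval k1 / (cpx (P n)).eval k1) * cpx (P n))
    (Pstar2 : ℕ → Polynomial ℂ)
    (hPstar2 : ∀ n, (X - Polynomial.C k2) * Pstar2 n =
      cpx (P (n + 1)) -
        Polynomial.C ((cpx (P (n + 1))).eval k2 / (cpx (P n)).eval k2) * cpx (P n))
    (Pss : ℕ → Polynomial ℂ)
    (hPss : ∀ n, (X - Polynomial.C k3) * Pss n =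
      Pstar2 (n + 1) -
        Polynomial.C ((Pstar2 (n + 1)).eval k3 / (Pstar2 n).eval k3) * Pstar2 n)
    (K : ℕ → ℂ)
    (hK : ∀ n, K n = ∑ j ∈ Finset.range (n + 1),
      (cpx (P j)).eval k2 * (cpx (P j)).eval k3 /
        ∏ i ∈ Finset.range (j + 1), (lam (i + 1) : ℂ))
    (n : ℕ) (hn : 1 ≤ n)
    (Lt Mt : ℂ)
    (hcond : Lt + Mt * (cpx (P n)).eval k1 /
          ((lam (n + 1) : ℂ) * (cpx (P (n - 1))).eval k1) =
        (cpx (P (n + 2))).eval k1 / (cpx (P (n + 1))).eval k1 -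
          (cpx (P (n + 2))).eval k2 / (cpx (P (n + 1))).eval k2 -
          (Pstar2 (n + 1)).eval k3 / (Pstar2 n).eval k3) :
    ∀ α β : ℂ,
      α = -(Mt * (cpx (P n)).eval k1 /
            ((lam (n + 1) : ℂ) * (cpx (P (n - 1))).eval k1)) →
      β = α * (c (n + 1) : ℂ) +
            Lt * ((cpx (P (n + 1))).eval k1 / (cpx (P n)).eval k1) - Mt +
            (lam (n + 2) : ℂ) * (K (n + 1) / K n) →
      (X - Polynomial.C k1) *
          (Pstar1 (n + 1) + Polynomial.C Lt * Pstar1 n +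
            Polynomial.C Mt * Pstar1 (n - 1)) -
          (X - Polynomial.C k2) * (X - Polynomial.C k3) * Pss n =
        (Polynomial.C α * X - Polynomial.C β) * cpx (P n) := by
  intro α β hα hβ
  obtain ⟨m, rfl⟩ : ∃ m, n = m + 1 := ⟨n - 1, by omega⟩
  have hlam : ∀ i, (lam (i + 1) : ℂ) ≠ 0 := by
    rintro (_ | i)
    · have hL1 := hposdef 1 one_ne_zero
      rw [one_pow, ← hlam1] at hL1
      exact_mod_cast hL1.ne'
    · exact_mod_cast (hlampos (i + 1) (by omega)).ne'
  have hrecC (j : ℕ) : X * cpx (P (j + 1)) = cpx (P (j + 2)) +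
      C (c (j + 2) : ℂ) * cpx (P (j + 1)) + C (lam (j + 2) : ℂ) * cpx (P j) := by
    simpa [cpx] using congrArg (map (algebraMap ℝ ℂ)) (hrec (j + 1) (by omega))
  have h0C : cpx (P 0) = 1 := by simp [cpx, hP0]
  have h1C : cpx (P 1) = X - C (c 1 : ℂ) := by simp [cpx, hP1]
  have hratio := kernel_eval_ratio_eq (fun j => cpx (P j)) Pstar2 (fun i => (c i : ℂ))
    (fun i => (lam i : ℂ)) k2 k3 h0C h1C hrecC hlam hk2 hPstar2 (m + 1)
  simp only [eval_christoffelDarbouxSum, ← hK] at hratio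
  simp only [Nat.add_sub_cancel] at hcond hα ⊢
  refine quasiKernel_sub_iteratedKernel_eq (fun j => cpx (P j)) Pstar1 Pstar2 (Pss (m + 1))
    (fun i => (c i : ℂ)) (fun i => (lam i : ℂ))
    (fun j => (cpx (P (j + 1))).eval k1 / (cpx (P j)).eval k1)
    (fun j => (cpx (P (j + 1))).eval k2 / (cpx (P j)).eval k2) k1 k2 k3
    ((Pstar2 (m + 2)).eval k3 / (Pstar2 (m + 1)).eval k3) Lt Mt α β m
    (hrecC m) hPstar1 hPstar2 (hPss (m + 1)) ?_ ?_ ?_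
  · linear_combination hα - hcond
  · rw [hα]
    field_simp [hlam (m + 1)]
  · linear_combination hβ - hratio

/-- With `P` the monic OPS of a positive definite moment functional
(`λ₁ := 𝓛(1)`), kernel polynomials `Pstar1` at `k₁`, `Pstar2` at `k₂`, iterated kernel
polynomials `Pss` at `(k₂,k₃)`, the Christoffel–Darboux sums
`K_n(k₂,k₃) = ∑_{j≤n} P_j(k₂)P_j(k₃)/(λ₁⋯λ_{j+1}) ≠ 0` (equivalently `P*_n(k₂;k₃) ≠ 0`),
and a monic quasi-type kernel polynomial of order two
`S*_{n+1}(k₁;·) = P*_{n+1}(k₁;·) + L̃_n P*_n(k₁;·) + M̃_n P*_{n−1}(k₁;·)` whose coefficients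
satisfy the compatibility condition: with `α_n := −M̃_n P_n(k₁)/(λ_{n+1} P_{n−1}(k₁))` and
`β_n := α_n c_{n+1} + L̃_n P_{n+1}(k₁)/P_n(k₁) − M̃_n + λ_{n+2} K_{n+1}(k₂,k₃)/K_n(k₂,k₃)`,
the identity
`(x − k₁) S*_{n+1}(k₁;x) − (x − k₂)(x − k₃) P*_n(k₂,k₃;x) = (α_n x − β_n) P_n(x)` holds. -/
theorem stmt_9
    (L : Polynomial ℝ →ₗ[ℝ] ℝ)
    (hposdef : ∀ p : Polynomial ℝ, p ≠ 0 → 0 < L (p ^ 2))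
    (P : ℕ → Polynomial ℝ)
    (hmonic : ∀ n, (P n).Monic)
    (hdeg : ∀ n, (P n).natDegree = n)
    (horth : ∀ m n, m ≠ n → L (P m * P n) = 0)
    (c lam : ℕ → ℝ)
    (hP0 : P 0 = 1)
    (hP1 : P 1 = X - Polynomial.C (c 1))
    (hrec : ∀ n, 1 ≤ n → X * P n =
      P (n + 1) + Polynomial.C (c (n + 1)) * P n + Polynomial.C (lam (n + 1)) * P (n - 1))
    (hlampos : ∀ n, 1 ≤ n → 0 < lam (n + 1))
    (hlam1 : lam 1 = L 1)
    (k1 k2 k3 : ℂ)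
    (hk1 : ∀ n, (cpx (P n)).eval k1 ≠ 0)
    (hk2 : ∀ n, (cpx (P n)).eval k2 ≠ 0)
    (Pstar1 : ℕ → Polynomial ℂ)
    (hPstar1 : ∀ n, (X - Polynomial.C k1) * Pstar1 n =
      cpx (P (n + 1)) -
        Polynomial.C ((cpx (P (n + 1))).eval k1 / (cpx (P n)).eval k1) * cpx (P n))
    (Pstar2 : ℕ → Polynomial ℂ)
    (hPstar2 : ∀ n, (X - Polynomial.C k2) * Pstar2 n =
      cpx (P (n + 1)) -
        Polynomial.C ((cpx (P (n + 1))).eval k2 / (cpx (P n)).eval k2) * cpx (P n))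
    (hPs2ne : ∀ n, (Pstar2 n).eval k3 ≠ 0)
    (Pss : ℕ → Polynomial ℂ)
    (hPss : ∀ n, (X - Polynomial.C k3) * Pss n =
      Pstar2 (n + 1) -
        Polynomial.C ((Pstar2 (n + 1)).eval k3 / (Pstar2 n).eval k3) * Pstar2 n)
    (K : ℕ → ℂ)
    (hK : ∀ n, K n = ∑ j ∈ Finset.range (n + 1),
      (cpx (P j)).eval k2 * (cpx (P j)).eval k3 /
        ∏ i ∈ Finset.range (j + 1), (lam (i + 1) : ℂ))
    (hKne : ∀ n, K n ≠ 0)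
    (n : ℕ) (hn : 1 ≤ n)
    (Lt Mt : ℂ)
    (hcond : Lt + Mt * (cpx (P n)).eval k1 /
          ((lam (n + 1) : ℂ) * (cpx (P (n - 1))).eval k1) =
        (cpx (P (n + 2))).eval k1 / (cpx (P (n + 1))).eval k1 -
          (cpx (P (n + 2))).eval k2 / (cpx (P (n + 1))).eval k2 -
          (Pstar2 (n + 1)).eval k3 / (Pstar2 n).eval k3) :
    ∀ α β : ℂ,
      α = -(Mt * (cpx (P n)).eval k1 /
            ((lam (n + 1) : ℂ) * (cpx (P (n - 1))).eval k1)) →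
      β = α * (c (n + 1) : ℂ) +
            Lt * ((cpx (P (n + 1))).eval k1 / (cpx (P n)).eval k1) - Mt +
            (lam (n + 2) : ℂ) * (K (n + 1) / K n) →
      (X - Polynomial.C k1) *
          (Pstar1 (n + 1) + Polynomial.C Lt * Pstar1 n +
            Polynomial.C Mt * Pstar1 (n - 1)) -
          (X - Polynomial.C k2) * (X - Polynomial.C k3) * Pss n =
        (Polynomial.C α * X - Polynomial.C β) * cpx (P n) :=
  stmt_9_general L hposdef P c lam hP0 hP1 hrec hlampos hlam1 k1 k2 k3 hk2 Pstar1 hPstar1 Pstar2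
    hPstar2 Pss hPss K hK n hn Lt Mt hcond
end

section
/- Fix k ∈ ℝ with P_n(k) ≠ 0 for all n. Then for every n ≥ 0, lim_{x→k} P*_{n+1}(k;x)/P*_n(k;x) = (P_n(k)/P_{n+1}(k)) · λ_{n+2} · (1 + P_{n+1}(k)² / (λ₁λ₂⋯λ_{n+2} · Σ_{j=0}^{n} P_j(k)²/(λ₁λ₂⋯λ_{j+1}))). -/
/-!
Differentiating `(X - k) P*_m = P_{m+1} - (P_{m+1}(k)/P_m(k)) P_m` at `x = k` gives
`P*_m(k) P_m(k) = P'_{m+1}(k) P_m(k) - P'_m(k) P_{m+1}(k)`. The three-term recurrence turns this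
confluent Wronskian into `W_{m+1} = P_{m+1}(k)² + λ_{m+2} W_m`, whose solution is the confluent
Christoffel–Darboux formula `W_m = λ₁⋯λ_{m+1} ∑_{j ≤ m} P_j(k)²/(λ₁⋯λ_{j+1})`. In particular
`P*_m(k) ≠ 0`, so the limit is the quotient `P*_{n+1}(k)/P*_n(k)`, which simplifies to the claim.
-/

open Polynomial Filter Topology

noncomputable section

namespace OrthogonalPolynomial

def lamProd (lam : ℕ → ℝ) (m : ℕ) : ℝ := ∏ i ∈ Finset.range m, lam (i + 1)

def kernelSum (P : ℕ → ℝ[X]) (lam : ℕ → ℝ) (k : ℝ) (m : ℕ) : ℝ :=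
  ∑ j ∈ Finset.range (m + 1), (P j).eval k ^ 2 / lamProd lam (j + 1)

def wronskian (P : ℕ → ℝ[X]) (k : ℝ) (m : ℕ) : ℝ :=
  (P (m + 1)).derivative.eval k * (P m).eval k - (P m).derivative.eval k * (P (m + 1)).eval k

lemma lamProd_pos {lam : ℕ → ℝ} (hlam : ∀ i, 0 < lam (i + 1)) (m : ℕ) : 0 < lamProd lam m :=
  Finset.prod_pos fun i _ => hlam i

lemma kernelSum_pos {P : ℕ → ℝ[X]} {lam : ℕ → ℝ} {k : ℝ} (hlam : ∀ i, 0 < lam (i + 1))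
    (h0 : (P 0).eval k ≠ 0) (m : ℕ) : 0 < kernelSum P lam k m :=
  Finset.sum_pos' (fun j _ => div_nonneg (sq_nonneg _) (lamProd_pos hlam _).le)
    ⟨0, by simp, div_pos (by positivity) (lamProd_pos hlam _)⟩

lemma lamProd_succ (lam : ℕ → ℝ) (m : ℕ) : lamProd lam (m + 1) = lamProd lam m * lam (m + 1) :=
  Finset.prod_range_succ _ _

lemma kernelSum_succ (P : ℕ → ℝ[X]) (lam : ℕ → ℝ) (k : ℝ) (m : ℕ) :
    kernelSum P lam k (m + 1) = kernelSum P lam k m + (P (m + 1)).eval k ^ 2 / lamProd lam (m + 2) :=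
  Finset.sum_range_succ _ _

lemma wronskian_succ {P : ℕ → ℝ[X]} {k a b : ℝ} {m : ℕ}
    (hrec : X * P (m + 1) = P (m + 2) + C a * P (m + 1) + C b * P m) :
    wronskian P k (m + 1) = (P (m + 1)).eval k ^ 2 + b * wronskian P k m := by
  have hval := congrArg (eval k) hrec
  have hder := congrArg (fun p => p.derivative.eval k) hrec
  simp only [eval_mul, eval_add, eval_C, eval_X] at hval
  simp only [derivative_mul, derivative_add, derivative_X, derivative_C, eval_add, eval_mul,
    eval_X, eval_C, one_mul, zero_mul, zero_add] at hder
  unfold wronskian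
  linear_combination (P (m + 1)).derivative.eval k * hval - (P (m + 1)).eval k * hder

/-- Confluent Christoffel–Darboux formula. -/
theorem wronskian_eq_lamProd_mul_kernelSum {P : ℕ → ℝ[X]} {c lam : ℕ → ℝ} {k : ℝ}
    (hP0 : P 0 = 1) (hP1 : P 1 = X - C (c 1))
    (hrec : ∀ n, 1 ≤ n → X * P n = P (n + 1) + C (c (n + 1)) * P n + C (lam (n + 1)) * P (n - 1))
    (hlam : ∀ i, lam (i + 1) ≠ 0) (m : ℕ) :
    wronskian P k m = lamProd lam (m + 1) * kernelSum P lam k m := by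
  induction m with
  | zero =>
    simpa [wronskian, lamProd, kernelSum, hP0, hP1] using (mul_inv_cancel₀ (hlam 0)).symm
  | succ m ih =>
    have := hlam (m + 1)
    have : lamProd lam (m + 1) ≠ 0 := Finset.prod_ne_zero_iff.mpr fun i _ => hlam i
    rw [wronskian_succ (hrec (m + 1) m.succ_pos), ih, kernelSum_succ, lamProd_succ lam (m + 1)]
    field_simp
    ring

lemma eval_eq_eval_derivative_of_X_sub_C_mul_eq {Q R : ℝ[X]} {k : ℝ} (h : (X - C k) * Q = R) :
    Q.eval k = R.derivative.eval k := by
  simp [← h, derivative_mul]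

lemma eval_kernel_mul_eval {Q A B : ℝ[X]} {k : ℝ} (hB : B.eval k ≠ 0)
    (h : (X - C k) * Q = A - C (A.eval k / B.eval k) * B) :
    Q.eval k * B.eval k = A.derivative.eval k * B.eval k - B.derivative.eval k * A.eval k := by
  rw [eval_eq_eval_derivative_of_X_sub_C_mul_eq h]
  simp only [derivative_sub, derivative_mul, derivative_C, zero_mul, zero_add, eval_sub, eval_mul,
    eval_C]
  field_simp

lemma tendsto_eval_div_eval_nhdsNE {p q : ℝ[X]} {k : ℝ} (hq : q.eval k ≠ 0) :
    Tendsto (fun x => p.eval x / q.eval x) (𝓝[≠] k) (𝓝 (p.eval k / q.eval k)) :=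
  ((p.continuous.tendsto k).div (q.continuous.tendsto k) hq).mono_left nhdsWithin_le_nhds

lemma lam_pos_of_posDef {L : ℝ[X] →ₗ[ℝ] ℝ} {lam : ℕ → ℝ}
    (hposdef : ∀ p : ℝ[X], p ≠ 0 → 0 < L (p ^ 2)) (hlampos : ∀ n, 1 ≤ n → 0 < lam (n + 1))
    (hlam1 : lam 1 = L 1) : ∀ i, 0 < lam (i + 1)
  | 0 => hlam1 ▸ by simpa using hposdef 1 one_ne_zero
  | i + 1 => hlampos (i + 1) i.succ_pos

section KernelValues

variable {P Pstar : ℕ → ℝ[X]} {lam : ℕ → ℝ} {k : ℝ} (hlam : ∀ i, 0 < lam (i + 1))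
  (hk : ∀ n, (P n).eval k ≠ 0)
  (hstar : ∀ m, (Pstar m).eval k * (P m).eval k = lamProd lam (m + 1) * kernelSum P lam k m)
include hlam hk hstar

lemma eval_kernel_ne_zero (m : ℕ) : (Pstar m).eval k ≠ 0 := fun h0 => by
  have := mul_pos (lamProd_pos hlam (m + 1)) (kernelSum_pos hlam (hk 0) m)
  rw [← hstar, h0, zero_mul] at this
  exact this.false

lemma eval_kernel_succ_div_eval_kernel (n : ℕ) :
    (Pstar (n + 1)).eval k / (Pstar n).eval k = (P n).eval k / (P (n + 1)).eval k *
      lam (n + 2) * (1 + (P (n + 1)).eval k ^ 2 / (lamProd lam (n + 2) * kernelSum P lam k n)) := by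
  have h1 := hstar n
  have h2 := hstar (n + 1)
  rw [kernelSum_succ, lamProd_succ] at h2
  rw [lamProd_succ]
  have := hk n; have := hk (n + 1); have := eval_kernel_ne_zero hlam hk hstar n
  have := (hlam (n + 1)).ne'; have := (lamProd_pos hlam (n + 1)).ne'
  have := (kernelSum_pos hlam (hk 0) n).ne'
  generalize lamProd lam (n + 1) = Λ at *
  generalize kernelSum P lam k n = S at *
  field_simp at h2 ⊢
  linear_combination Λ * S * h2 - (Λ * lam (n + 2) * S + (P (n + 1)).eval k ^ 2) * h1

end KernelValues

end OrthogonalPolynomial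

end

open OrthogonalPolynomial in
theorem stmt_10_general
    (L : Polynomial ℝ →ₗ[ℝ] ℝ)
    (hposdef : ∀ p : Polynomial ℝ, p ≠ 0 → 0 < L (p ^ 2))
    (P : ℕ → Polynomial ℝ)
    (c lam : ℕ → ℝ)
    (hP0 : P 0 = 1)
    (hP1 : P 1 = X - Polynomial.C (c 1))
    (hrec : ∀ n, 1 ≤ n → X * P n =
      P (n + 1) + Polynomial.C (c (n + 1)) * P n + Polynomial.C (lam (n + 1)) * P (n - 1))
    (hlampos : ∀ n, 1 ≤ n → 0 < lam (n + 1))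
    (hlam1 : lam 1 = L 1)
    (k : ℝ)
    (hk : ∀ n, (P n).eval k ≠ 0)
    (Pstar : ℕ → Polynomial ℝ)
    (hPstar : ∀ n, (X - Polynomial.C k) * Pstar n =
      P (n + 1) - Polynomial.C ((P (n + 1)).eval k / (P n).eval k) * P n) :
    ∀ n : ℕ,
      Tendsto (fun x : ℝ => (Pstar (n + 1)).eval x / (Pstar n).eval x) (𝓝[≠] k)
        (𝓝 (((P n).eval k / (P (n + 1)).eval k) * lam (n + 2) *
          (1 + ((P (n + 1)).eval k) ^ 2 /
            ((∏ i ∈ Finset.range (n + 2), lam (i + 1)) *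
              ∑ j ∈ Finset.range (n + 1),
                ((P j).eval k) ^ 2 / ∏ i ∈ Finset.range (j + 1), lam (i + 1))))) := by
  intro n
  have hlam := lam_pos_of_posDef hposdef hlampos hlam1
  have hstar (m : ℕ) :
      (Pstar m).eval k * (P m).eval k = lamProd lam (m + 1) * kernelSum P lam k m := by
    rw [eval_kernel_mul_eval (hk m) (hPstar m)]
    exact wronskian_eq_lamProd_mul_kernelSum hP0 hP1 hrec (fun i => (hlam i).ne') m
  have hlim := tendsto_eval_div_eval_nhdsNE (p := Pstar (n + 1))
    (eval_kernel_ne_zero hlam hk hstar n)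
  rw [eval_kernel_succ_div_eval_kernel hlam hk hstar n] at hlim
  exact hlim

/-- With `𝓛` a positive definite moment functional (`λ₁ := 𝓛(1)`), `P`
its monic OPS with recurrence coefficients `c`, `λ`, `k ∈ ℝ` with `P_n(k) ≠ 0` for all `n`,
and `Pstar` the monic kernel polynomials at `k`: for every `n ≥ 0`,
`lim_{x→k} P*_{n+1}(k;x)/P*_n(k;x)
  = (P_n(k)/P_{n+1}(k)) λ_{n+2} (1 + P_{n+1}(k)²/(λ₁⋯λ_{n+2} ∑_{j=0}^n P_j(k)²/(λ₁⋯λ_{j+1})))`. -/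
theorem stmt_10
    (L : Polynomial ℝ →ₗ[ℝ] ℝ)
    (hposdef : ∀ p : Polynomial ℝ, p ≠ 0 → 0 < L (p ^ 2))
    (P : ℕ → Polynomial ℝ)
    (hmonic : ∀ n, (P n).Monic)
    (hdeg : ∀ n, (P n).natDegree = n)
    (horth : ∀ m n, m ≠ n → L (P m * P n) = 0)
    (c lam : ℕ → ℝ)
    (hP0 : P 0 = 1)
    (hP1 : P 1 = X - Polynomial.C (c 1))
    (hrec : ∀ n, 1 ≤ n → X * P n =
      P (n + 1) + Polynomial.C (c (n + 1)) * P n + Polynomial.C (lam (n + 1)) * P (n - 1))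
    (hlampos : ∀ n, 1 ≤ n → 0 < lam (n + 1))
    (hlam1 : lam 1 = L 1)
    (k : ℝ)
    (hk : ∀ n, (P n).eval k ≠ 0)
    (Pstar : ℕ → Polynomial ℝ)
    (hPstar : ∀ n, (X - Polynomial.C k) * Pstar n =
      P (n + 1) - Polynomial.C ((P (n + 1)).eval k / (P n).eval k) * P n) :
    ∀ n : ℕ,
      Tendsto (fun x : ℝ => (Pstar (n + 1)).eval x / (Pstar n).eval x) (𝓝[≠] k)
        (𝓝 (((P n).eval k / (P (n + 1)).eval k) * lam (n + 2) *
          (1 + ((P (n + 1)).eval k) ^ 2 /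
            ((∏ i ∈ Finset.range (n + 2), lam (i + 1)) *
              ∑ j ∈ Finset.range (n + 1),
                ((P j).eval k) ^ 2 / ∏ i ∈ Finset.range (j + 1), lam (i + 1))))) :=
  stmt_10_general L hposdef P c lam hP0 hP1 hrec hlampos hlam1 k hk Pstar hPstar
end

section
/- Fix k ∈ ℝ with P_n(k) ≠ 0 for all n. Then for every n ≥ 0, lim_{x→k} P*_n(k;x)/P*_{n+1}(k;x) = (P_{n+1}(k)/P_n(k)) · (1/λ_{n+2}) · (1 − P_{n+1}(k)² / (λ₁λ₂⋯λ_{n+2} · Σ_{j=0}^{n+1} P_j(k)²/(λ₁λ₂⋯λ_{j+1}))). -/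
open Polynomial Filter Topology

/-!
By the confluent Christoffel–Darboux formula, the Wronskian `P_n P'_{n+1} - P'_n P_{n+1}` at `k`
equals `S_{n+1} := λ₁⋯λ_{n+1} ∑_{j ≤ n} P_j(k)²/(λ₁⋯λ_{j+1})`, and differentiating the
defining identity of `P*_n` at `x = k` gives `P*_n(k) = S_{n+1}/P_n(k)`. Since `S_{n+2} > 0`,
the ratio is continuous at `k`, and its value there is rewritten with
`S_{n+2} = λ_{n+2} S_{n+1} + P_{n+1}(k)²`.
-/

/-- `λ₁⋯λ_m · K_{m-1}(k,k)`, where `v j` stands for `P_j(k)`. -/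
noncomputable def kernelSum (lam v : ℕ → ℝ) (m : ℕ) : ℝ :=
  (∏ i ∈ Finset.range m, lam (i + 1)) *
    ∑ j ∈ Finset.range m, v j ^ 2 / ∏ i ∈ Finset.range (j + 1), lam (i + 1)

section KernelSum

variable {lam : ℕ → ℝ} (v : ℕ → ℝ)

theorem kernelSum_zero : kernelSum lam v 0 = 0 := by
  simp [kernelSum]

theorem kernelSum_succ (hlam : ∀ i, lam (i + 1) ≠ 0) (m : ℕ) :
    kernelSum lam v (m + 1) = lam (m + 1) * kernelSum lam v m + v m ^ 2 := by
  have hprod : ∏ i ∈ Finset.range (m + 1), lam (i + 1) ≠ 0 :=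
    Finset.prod_ne_zero_iff.mpr fun i _ => hlam i
  rw [kernelSum, Finset.sum_range_succ, mul_add, mul_div_cancel₀ _ hprod,
    Finset.prod_range_succ, kernelSum]
  ring

theorem kernelSum_succ_pos (hlam : ∀ i, 0 < lam (i + 1)) (hv : v 0 ≠ 0) (m : ℕ) :
    0 < kernelSum lam v (m + 1) :=
  mul_pos (Finset.prod_pos fun i _ => hlam i) <|
    Finset.sum_pos' (fun j _ => div_nonneg (sq_nonneg _) (Finset.prod_pos fun i _ => hlam i).le)
      ⟨0, by simp, div_pos (sq_pos_of_ne_zero hv) (Finset.prod_pos fun i _ => hlam i)⟩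

end KernelSum

theorem lam_succ_pos (L : Polynomial ℝ →ₗ[ℝ] ℝ)
    (hposdef : ∀ p : Polynomial ℝ, p ≠ 0 → 0 < L (p ^ 2)) (lam : ℕ → ℝ)
    (hlampos : ∀ n, 1 ≤ n → 0 < lam (n + 1)) (hlam1 : lam 1 = L 1) (m : ℕ) :
    0 < lam (m + 1) := by
  cases m with
  | zero => simpa [hlam1] using hposdef 1 one_ne_zero
  | succ m => exact hlampos (m + 1) m.succ_pos

theorem wronskian_succ_of_recurrence (P : ℕ → Polynomial ℝ) (c lam : ℕ → ℝ) (n : ℕ)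
    (hrec : X * P (n + 1) =
      P (n + 2) + Polynomial.C (c (n + 2)) * P (n + 1) + Polynomial.C (lam (n + 2)) * P n) :
    wronskian (P (n + 1)) (P (n + 2)) =
      Polynomial.C (lam (n + 2)) * wronskian (P n) (P (n + 1)) + P (n + 1) ^ 2 := by
  have hrec' := congrArg derivative hrec
  simp only [derivative_mul, derivative_add, derivative_C, derivative_X, zero_mul, one_mul,
    zero_add] at hrec'
  simp only [wronskian]
  linear_combination derivative (P (n + 1)) * hrec - P (n + 1) * hrec'

theorem eval_wronskian_eq_kernelSum (P : ℕ → Polynomial ℝ) (c lam : ℕ → ℝ)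
    (hP0 : P 0 = 1) (hP1 : P 1 = X - Polynomial.C (c 1))
    (hrec : ∀ n, 1 ≤ n → X * P n =
      P (n + 1) + Polynomial.C (c (n + 1)) * P n + Polynomial.C (lam (n + 1)) * P (n - 1))
    (hlam : ∀ i, lam (i + 1) ≠ 0) (k : ℝ) (n : ℕ) :
    (wronskian (P n) (P (n + 1))).eval k = kernelSum lam (fun j => (P j).eval k) (n + 1) := by
  induction n with
  | zero =>
    simp [kernelSum_succ _ hlam, kernelSum_zero, wronskian, hP0, hP1]
  | succ n ih =>
    rw [wronskian_succ_of_recurrence P c lam n (hrec (n + 1) n.succ_pos), kernelSum_succ _ hlam,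
      eval_add, eval_mul, eval_C, eval_pow, ih]

theorem eval_mul_eval_eq_eval_wronskian {A B Q : Polynomial ℝ} {k : ℝ} (hB : B.eval k ≠ 0)
    (hQ : (X - Polynomial.C k) * Q = A - Polynomial.C (A.eval k / B.eval k) * B) :
    Q.eval k * B.eval k = (wronskian B A).eval k := by
  have hQ' := congrArg (fun p => (derivative p).eval k) hQ
  simp only [derivative_mul, derivative_sub, derivative_X, derivative_C, eval_add, eval_sub,
    eval_mul, eval_X, eval_C, sub_self, zero_mul, one_mul, sub_zero, zero_add, add_zero] at hQ'
  rw [hQ', wronskian, eval_sub, eval_mul, eval_mul]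
  field_simp

theorem stmt_11_general
    (L : Polynomial ℝ →ₗ[ℝ] ℝ)
    (hposdef : ∀ p : Polynomial ℝ, p ≠ 0 → 0 < L (p ^ 2))
    (P : ℕ → Polynomial ℝ)
    (c lam : ℕ → ℝ)
    (hP0 : P 0 = 1)
    (hP1 : P 1 = X - Polynomial.C (c 1))
    (hrec : ∀ n, 1 ≤ n → X * P n =
      P (n + 1) + Polynomial.C (c (n + 1)) * P n + Polynomial.C (lam (n + 1)) * P (n - 1))
    (hlampos : ∀ n, 1 ≤ n → 0 < lam (n + 1))
    (hlam1 : lam 1 = L 1)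
    (k : ℝ)
    (hk : ∀ n, (P n).eval k ≠ 0)
    (Pstar : ℕ → Polynomial ℝ)
    (hPstar : ∀ n, (X - Polynomial.C k) * Pstar n =
      P (n + 1) - Polynomial.C ((P (n + 1)).eval k / (P n).eval k) * P n) :
    ∀ n : ℕ,
      Tendsto (fun x : ℝ => (Pstar n).eval x / (Pstar (n + 1)).eval x) (𝓝[≠] k)
        (𝓝 (((P (n + 1)).eval k / (P n).eval k) * (1 / lam (n + 2)) *
          (1 - ((P (n + 1)).eval k) ^ 2 /
            ((∏ i ∈ Finset.range (n + 2), lam (i + 1)) *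
              ∑ j ∈ Finset.range (n + 2),
                ((P j).eval k) ^ 2 / ∏ i ∈ Finset.range (j + 1), lam (i + 1))))) := by
  intro n
  set v : ℕ → ℝ := fun j => (P j).eval k
  have hlam := lam_succ_pos L hposdef lam hlampos hlam1
  have hS : ∀ m, 0 < kernelSum lam v (m + 1) :=
    kernelSum_succ_pos v hlam (by simp [v, hP0])
  have hPstar_eval : ∀ m, (Pstar m).eval k = kernelSum lam v (m + 1) / v m := fun m => by
    rw [eq_div_iff (hk m), eval_mul_eval_eq_eval_wronskian (hk m) (hPstar m),
      eval_wronskian_eq_kernelSum P c lam hP0 hP1 hrec (fun i => (hlam i).ne')]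
  have hcont : ContinuousAt (fun x : ℝ => (Pstar n).eval x / (Pstar (n + 1)).eval x) k :=
    (Pstar n).continuousAt.div (Pstar (n + 1)).continuousAt <| by
      rw [hPstar_eval]; exact div_ne_zero (hS _).ne' (hk _)
  convert hcont.tendsto.mono_left nhdsWithin_le_nhds using 2
  change v (n + 1) / v n * (1 / lam (n + 2)) * (1 - v (n + 1) ^ 2 / kernelSum lam v (n + 2)) = _
  have hsucc := kernelSum_succ v (fun i => (hlam i).ne') (n + 1)
  have hT := hS (n + 1)
  rw [hsucc] at hT
  rw [hPstar_eval, hPstar_eval, hsucc]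
  field_simp [hk n, hk (n + 1), (hlam (n + 1)).ne', hT.ne']
  ring

/-- With `𝓛` a positive definite moment functional (`λ₁ := 𝓛(1)`), `P`
its monic OPS with recurrence coefficients `c`, `λ`, `k ∈ ℝ` with `P_n(k) ≠ 0` for all `n`,
and `Pstar` the monic kernel polynomials at `k`: for every `n ≥ 0`,
`lim_{x→k} P*_n(k;x)/P*_{n+1}(k;x)
  = (P_{n+1}(k)/P_n(k)) (1/λ_{n+2}) (1 − P_{n+1}(k)²/(λ₁⋯λ_{n+2} ∑_{j=0}^{n+1} P_j(k)²/(λ₁⋯λ_{j+1})))`. -/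
theorem stmt_11
    (L : Polynomial ℝ →ₗ[ℝ] ℝ)
    (hposdef : ∀ p : Polynomial ℝ, p ≠ 0 → 0 < L (p ^ 2))
    (P : ℕ → Polynomial ℝ)
    (hmonic : ∀ n, (P n).Monic)
    (hdeg : ∀ n, (P n).natDegree = n)
    (horth : ∀ m n, m ≠ n → L (P m * P n) = 0)
    (c lam : ℕ → ℝ)
    (hP0 : P 0 = 1)
    (hP1 : P 1 = X - Polynomial.C (c 1))
    (hrec : ∀ n, 1 ≤ n → X * P n =
      P (n + 1) + Polynomial.C (c (n + 1)) * P n + Polynomial.C (lam (n + 1)) * P (n - 1))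
    (hlampos : ∀ n, 1 ≤ n → 0 < lam (n + 1))
    (hlam1 : lam 1 = L 1)
    (k : ℝ)
    (hk : ∀ n, (P n).eval k ≠ 0)
    (Pstar : ℕ → Polynomial ℝ)
    (hPstar : ∀ n, (X - Polynomial.C k) * Pstar n =
      P (n + 1) - Polynomial.C ((P (n + 1)).eval k / (P n).eval k) * P n) :
    ∀ n : ℕ,
      Tendsto (fun x : ℝ => (Pstar n).eval x / (Pstar (n + 1)).eval x) (𝓝[≠] k)
        (𝓝 (((P (n + 1)).eval k / (P n).eval k) * (1 / lam (n + 2)) *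
          (1 - ((P (n + 1)).eval k) ^ 2 /
            ((∏ i ∈ Finset.range (n + 2), lam (i + 1)) *
              ∑ j ∈ Finset.range (n + 2),
                ((P j).eval k) ^ 2 / ∏ i ∈ Finset.range (j + 1), lam (i + 1))))) :=
  stmt_11_general L hposdef P c lam hP0 hP1 hrec hlampos hlam1 k hk Pstar hPstar
end

section
/- For every n ≥ 0, lim_{x→1} Ĉ*_{n+1}(1;x)/Ĉ*_n(1;x) = (2n+3)/(2(2n+1)); consequently lim_{n→∞} lim_{x→1} Ĉ*_{n+1}(1;x)/Ĉ*_n(1;x) = 1/2. -/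
open Polynomial Filter Topology

/-- The monic Chebyshev polynomials of the first kind:
`Ĉ_0 = 1`, `Ĉ_1 = x`, `Ĉ_2 = x Ĉ_1 − (1/2) Ĉ_0`, and
`Ĉ_{n+1} = x Ĉ_n − (1/4) Ĉ_{n−1}` for `n ≥ 2`. -/
noncomputable def cheb : ℕ → Polynomial ℝ
  | 0 => 1
  | 1 => X
  | 2 => X * X - Polynomial.C (1 / 2)
  | n + 3 => X * cheb (n + 2) - Polynomial.C (1 / 4) * cheb (n + 1)

/-- The monic kernel polynomials of the Chebyshev polynomials at `k = 1`:
`Ĉ*_n(1;x) = (x − 1)⁻¹ [Ĉ_{n+1}(x) − (Ĉ_{n+1}(1)/Ĉ_n(1)) Ĉ_n(x)]`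
(an exact division by the monic polynomial `X − 1`). -/
noncomputable def chebStar (n : ℕ) : Polynomial ℝ :=
  (cheb (n + 1) - Polynomial.C ((cheb (n + 1)).eval 1 / (cheb n).eval 1) * cheb n) /ₘ
    (X - Polynomial.C 1)

/-
Since `Ĉ_n(1) = 2^{1-n}` and `Ĉ_n'(1) = n² 2^{1-n}` (both from the three-term recurrence), and the
quotient of a polynomial by `X - 1` takes at `1` the value of the derivative of that polynomial,
`Ĉ*_n(1;1) = (2n+1)/2^n ≠ 0`. The inner limit is then the quotient of these values, by continuity.
-/

theorem eval_divByMonic_X_sub_C_self {R : Type*} [CommRing R] (f : R[X]) (a : R) :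
    (f /ₘ (X - C a)).eval a = (derivative f).eval a := by
  simpa using
    congrArg (eval a) (divByMonic_add_X_sub_C_mul_derivative_divByMonic_eq_derivative f a)

theorem cheb_succ_eval_one (n : ℕ) : (cheb (n + 1)).eval 1 = (2 ^ n)⁻¹ := by
  induction n using Nat.twoStepInduction with
  | zero => simp [cheb]
  | one => norm_num [cheb]
  | more n ih₀ ih₁ =>
    simp only [cheb, eval_sub, eval_mul, eval_X, eval_C, ih₀, ih₁]
    field_simp
    ring

theorem derivative_cheb_succ_eval_one (n : ℕ) :
    (derivative (cheb (n + 1))).eval 1 = (n + 1) ^ 2 / 2 ^ n := by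
  induction n using Nat.twoStepInduction with
  | zero => simp [cheb]
  | one => norm_num [cheb]
  | more n ih₀ ih₁ =>
    simp only [cheb, derivative_sub, derivative_mul, derivative_X, derivative_C, eval_sub,
      eval_mul, eval_add, eval_X, eval_C, eval_one, eval_zero, ih₀, ih₁, cheb_succ_eval_one]
    push_cast
    field_simp
    ring

theorem chebStar_eval_one (n : ℕ) : (chebStar n).eval 1 = (2 * n + 1) / 2 ^ n := by
  rw [chebStar, eval_divByMonic_X_sub_C_self]
  cases n with
  | zero => simp [cheb]
  | succ n =>
    simp only [derivative_sub, derivative_mul, derivative_C, eval_sub, eval_mul, eval_C,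
      zero_mul, zero_add, cheb_succ_eval_one, derivative_cheb_succ_eval_one]
    push_cast
    field_simp
    ring

theorem chebStar_succ_eval_one_div (n : ℕ) :
    (chebStar (n + 1)).eval 1 / (chebStar n).eval 1 = (2 * n + 3) / (2 * (2 * n + 1)) := by
  rw [chebStar_eval_one, chebStar_eval_one]
  push_cast
  field_simp
  ring

/-- For every `n ≥ 0`,
`lim_{x→1} Ĉ*_{n+1}(1;x)/Ĉ*_n(1;x) = (2n+3)/(2(2n+1))`; consequently
`lim_{n→∞} lim_{x→1} Ĉ*_{n+1}(1;x)/Ĉ*_n(1;x) = 1/2`. -/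
theorem stmt_12 :
    (∀ n : ℕ,
      Tendsto (fun x : ℝ => (chebStar (n + 1)).eval x / (chebStar n).eval x)
        (𝓝[≠] (1 : ℝ))
        (𝓝 ((2 * (n : ℝ) + 3) / (2 * (2 * (n : ℝ) + 1))))) ∧
    Tendsto (fun n : ℕ => (2 * (n : ℝ) + 3) / (2 * (2 * (n : ℝ) + 1))) atTop
      (𝓝 (1 / 2)) := by
  refine ⟨fun n => ?_, ?_⟩
  · have hn : (chebStar n).eval 1 ≠ 0 := by rw [chebStar_eval_one]; positivity
    rw [← chebStar_succ_eval_one_div]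
    exact ((chebStar (n + 1)).continuousAt.div (chebStar n).continuousAt hn).tendsto.mono_left
      nhdsWithin_le_nhds
  · convert tendsto_add_mul_div_add_mul_atTop_nhds (3 : ℝ) 2 2 (d := 4) (by norm_num)
      using 2 with n
    · ring
    · norm_num
end

section
/- For every n ≥ 0 the polynomial identity Ĉ_{n+1}(x) = Ĉ*_{n+1}(1;x) − (1/2) Ĉ*_n(1;x) holds (so each Ĉ_{n+1} is a quasi-type kernel polynomial of order one at k = 1), and lim_{x→1} Ĉ_{n+1}(x)/Ĉ*_{n+1}(1;x) = 2/(2n+3). -/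
/-!
The kernel polynomials are the monic Chebyshev polynomials `W_n` of the fourth kind
(`W_0 = 1`, `W_1 = x + 1/2`, `W_{n+2} = x W_{n+1} - W_n / 4`). Both sides of
`Ĉ_{n+1} = W_{n+1} - W_n / 2` obey the recurrence `p_{n+1} = x p_n - p_{n-1} / 4` from degree `3`
on, so the identity is checked for `n = 0, 1` only. Since `Ĉ_{n+1}(1) / Ĉ_n(1) = 1/2` for
`n ≥ 1`, this identity gives `(x - 1) W_n = Ĉ_{n+1} - (Ĉ_{n+1}(1) / Ĉ_n(1)) Ĉ_n`, i.e. `Ĉ*_n(1; ·) = W_n`.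
As `W_{n+1}(1) = (2n + 3) / 2^{n+1} ≠ 0`, the limit is the value of the quotient at `1`.
-/

open Polynomial Filter Topology

theorem Polynomial.tendsto_eval_div_eval_nhdsNE {𝕜 : Type*} [NormedField 𝕜] {p q : 𝕜[X]}
    {a : 𝕜} (hq : q.eval a ≠ 0) :
    Tendsto (fun x => p.eval x / q.eval x) (𝓝[≠] a) (𝓝 (p.eval a / q.eval a)) :=
  (p.continuousAt.div q.continuousAt hq).tendsto.mono_left nhdsWithin_le_nhds

noncomputable def chebW : ℕ → ℝ[X]
  | 0 => 1
  | 1 => X + C (1 / 2)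
  | n + 2 => X * chebW (n + 1) - C (1 / 4) * chebW n

lemma C_half_mul_C_half : (C (1 / 2) * C (1 / 2) : ℝ[X]) = C (1 / 4) := by
  rw [← C_mul]; norm_num

lemma C_half_add_C_half : (C (1 / 2) + C (1 / 2) : ℝ[X]) = 1 := by
  rw [← C_add]; norm_num

lemma cheb_eval_one_succ (n : ℕ) : (cheb (n + 1)).eval 1 = (1 / 2 : ℝ) ^ n := by
  induction n using Nat.twoStepInduction with
  | zero => simp [cheb]
  | one => norm_num [cheb]
  | more n ih₁ ih₂ =>
    rw [cheb]
    simp only [eval_sub, eval_mul, eval_X, eval_C, ih₁, ih₂]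
    ring

lemma chebW_eval_one (n : ℕ) : (chebW n).eval 1 = (2 * n + 1) / 2 ^ n := by
  induction n using Nat.twoStepInduction with
  | zero => simp [chebW]
  | one => norm_num [chebW]
  | more n ih₁ ih₂ =>
    rw [chebW]
    simp only [eval_sub, eval_mul, eval_X, eval_C, ih₁, ih₂]
    push_cast
    field_simp
    ring

lemma cheb_succ_eq_chebW (n : ℕ) : cheb (n + 1) = chebW (n + 1) - C (1 / 2) * chebW n := by
  induction n using Nat.twoStepInduction with
  | zero => simp only [cheb, chebW]; ring
  | one =>
    simp only [cheb, chebW]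
    linear_combination C (1 / 2) * C_half_add_C_half - C_half_mul_C_half
  | more n ih₁ ih₂ =>
    rw [cheb, ih₁, ih₂, chebW.eq_3 (n + 1), chebW.eq_3 n]
    ring

lemma cheb_eval_one_succ_div (n : ℕ) :
    (cheb (n + 1)).eval 1 / (cheb n).eval 1 = if n = 0 then 1 else 1 / 2 := by
  rcases n with _ | n
  · simp [cheb]
  · rw [cheb_eval_one_succ, cheb_eval_one_succ, pow_succ, if_neg n.succ_ne_zero]
    field_simp

lemma X_sub_one_mul_chebW (n : ℕ) :
    (X - C 1) * chebW n =
      cheb (n + 1) - C ((cheb (n + 1)).eval 1 / (cheb n).eval 1) * cheb n := by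
  rw [cheb_eval_one_succ_div, C_1]
  rcases n with _ | n
  · simp only [↓reduceIte, cheb, chebW, C_1]; ring
  · rw [if_neg n.succ_ne_zero, cheb_succ_eq_chebW, cheb_succ_eq_chebW, chebW.eq_3 n]
    linear_combination chebW (n + 1) * C_half_add_C_half - chebW n * C_half_mul_C_half

lemma chebStar_eq_chebW (n : ℕ) : chebStar n = chebW n := by
  rw [chebStar, ← X_sub_one_mul_chebW]
  exact mul_divByMonic_cancel_left _ (monic_X_sub_C 1)

/-- For every `n ≥ 0` the polynomial identity
`Ĉ_{n+1}(x) = Ĉ*_{n+1}(1;x) − (1/2) Ĉ*_n(1;x)` holds (so each `Ĉ_{n+1}` is a quasi-type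
kernel polynomial of order one at `k = 1`), and
`lim_{x→1} Ĉ_{n+1}(x)/Ĉ*_{n+1}(1;x) = 2/(2n+3)`. -/
theorem stmt_13 :
    ∀ n : ℕ,
      cheb (n + 1) = chebStar (n + 1) - Polynomial.C (1 / 2) * chebStar n ∧
      Tendsto (fun x : ℝ => (cheb (n + 1)).eval x / (chebStar (n + 1)).eval x)
        (𝓝[≠] (1 : ℝ))
        (𝓝 (2 / (2 * (n : ℝ) + 3))) := by
  intro n
  simp only [chebStar_eq_chebW]
  refine ⟨cheb_succ_eq_chebW n, ?_⟩
  have hW : (chebW (n + 1)).eval 1 = (2 * n + 3) / 2 ^ (n + 1) := by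
    rw [chebW_eval_one]; push_cast; ring
  have hval : (cheb (n + 1)).eval 1 / (chebW (n + 1)).eval 1 = 2 / (2 * n + 3) := by
    rw [hW, cheb_eval_one_succ, pow_succ, one_div_pow]
    field_simp
  rw [← hval]
  exact tendsto_eval_div_eval_nhdsNE (by rw [hW]; positivity)
end
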